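/- arXiv:2310.09980 — 6 statements merged into one kernel-verified Lean document; each statement's English description precedes it below -/
import Mathlib

section
/- Let K be a totally real number field with ring of integers O_K, and let α be a totally positive element of O_K. Then α · p_K(α) = Σ_{0 ≺ β ≼ α} σ_K(β) · p_K(α − β), where the sum is over all totally positive β ∈ O_K with β ≼ α. -/
open NumberField

/-- An element of the ring of integers is totally positive if its image under
every real embedding of the field is positive. -/
def TotallyPositive (K : Type*) [Field K] [NumberField K] (x : 𝓞 K) : Prop :=
  ∀ φ : K →+* ℝ, 0 < φ (x : K)

/-- The partition function `p_K` : the number of ways to write `α` as a sum of a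
multiset of totally positive integers of `K`. -/
noncomputable def partitionFun (K : Type*) [Field K] [NumberField K] (α : 𝓞 K) : ℕ :=
  Nat.card {m : Multiset (𝓞 K) // (∀ β ∈ m, TotallyPositive K β) ∧ m.sum = α}

/-- `σ_K(β) = ∑_{n ∈ ℤ≥1, n ∣ β} β/n`, written as the sum of all `γ ∈ 𝓞 K`
such that `n • γ = β` for some positive natural number `n`. -/
noncomputable def sigmaK (K : Type*) [Field K] [NumberField K] (β : 𝓞 K) : 𝓞 K :=
  ∑ᶠ γ ∈ {γ : 𝓞 K | ∃ n : ℕ, 0 < n ∧ (n : 𝓞 K) * γ = β}, γ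

/-!
Summing `α = λ.sum` over all partitions `λ` of `α` gives `α p_K(α) = ∑_λ ∑_γ m_γ(λ) γ`, where
`m_γ(λ)` is the multiplicity of `γ` in `λ`. Writing `m_γ(λ) = #{n ≥ 1 | n ≤ m_γ(λ)}` and removing
`n` copies of `γ`, the partitions of `α` containing `γ` at least `n` times correspond to the
partitions of `α - nγ`, so the sum is `∑_{γ, n ≥ 1} γ p_K(α - nγ)`; grouping the terms by `β = nγ`
gives `∑_β σ_K(β) p_K(α - β)`.

Total reality makes everything finite: the `β` with `0 ≺ β ≼ α` have conjugates bounded by those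
of `α`, and the value of one real embedding bounds the number of parts of a partition of `α`.
-/

section Partitions

open Multiset

lemma Set.Finite.exists_pos_forall_le {ι : Type*} {S : Set ι} (hS : Set.Finite S) {f : ι → ℝ}
    (hf : ∀ x ∈ S, 0 < f x) : ∃ ε > 0, ∀ x ∈ S, ε ≤ f x := by
  rcases S.eq_empty_or_nonempty with rfl | hne
  · exact ⟨1, one_pos, by simp⟩
  · obtain ⟨a, ha, hmin⟩ := S.exists_min_image f hS hne
    exact ⟨f a, hf a ha, hmin⟩

lemma Multiset.finite_setOf_forall_mem_card_le {α : Type*} {T : Set α} (hT : T.Finite) (N : ℕ) :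
    {m : Multiset α | (∀ x ∈ m, x ∈ T) ∧ card m ≤ N}.Finite := by
  classical
  refine (finite_toSet (N • hT.toFinset.val).powerset).subset fun m ⟨hmT, hmN⟩ => ?_
  rw [Set.mem_ofPred_eq, mem_powerset, le_iff_count]
  intro a
  by_cases ha : a ∈ m
  · rw [count_nsmul, count_eq_one_of_mem hT.toFinset.nodup (hT.mem_toFinset.mpr (hmT a ha)),
      mul_one]
    exact (count_le_card a m).trans hmN
  · simp [count_eq_zero_of_notMem ha]

lemma sum_count_eq_sum_card_filter_replicate_le {α : Type*} [DecidableEq α]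
    (F : Finset (Multiset α)) (a : α) {N : ℕ} (hN : ∀ m ∈ F, card m ≤ N) :
    ∑ m ∈ F, count a m = ∑ n ∈ Finset.Icc 1 N, (F.filter (replicate n a ≤ ·)).card := by
  have hcount (m : Multiset α) (hm : m ∈ F) :
      count a m = ((Finset.Icc 1 N).filter (· ≤ count a m)).card := by
    have : (Finset.Icc 1 N).filter (· ≤ count a m) = Finset.Icc 1 (count a m) := by
      have := (count_le_card a m).trans (hN m hm)
      ext n; simp only [Finset.mem_filter, Finset.mem_Icc]; omega
    rw [this, Nat.card_Icc, Nat.add_sub_cancel]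
  rw [Finset.sum_congr rfl hcount]
  simp only [← le_count_iff_replicate_le]
  exact Finset.sum_card_bipartiteAbove_eq_sum_card_bipartiteBelow _

variable {R : Type*} [AddCommGroup R] {s : Set R}

def partitionsWith (s : Set R) (δ : R) : Set (Multiset R) :=
  {m | (∀ x ∈ m, x ∈ s) ∧ m.sum = δ}

lemma add_mem_partitionsWith {m₁ m₂ : Multiset R} {δ₁ δ₂ : R}
    (h₁ : m₁ ∈ partitionsWith s δ₁) (h₂ : m₂ ∈ partitionsWith s δ₂) :
    m₁ + m₂ ∈ partitionsWith s (δ₁ + δ₂) :=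
  ⟨fun x hx => (mem_add.mp hx).elim (h₁.1 x) (h₂.1 x), by rw [sum_add, h₁.2, h₂.2]⟩

lemma replicate_mem_partitionsWith {γ : R} (hγ : γ ∈ s) (n : ℕ) :
    replicate n γ ∈ partitionsWith s (n • γ) :=
  ⟨fun _ hx => eq_of_mem_replicate hx ▸ hγ, sum_replicate n γ⟩

lemma add_replicate_mem_partitionsWith {γ δ : R} {m : Multiset R} {n : ℕ} (hγ : γ ∈ s)
    (hm : m ∈ partitionsWith s (δ - n • γ)) : m + replicate n γ ∈ partitionsWith s δ := by
  simpa using add_mem_partitionsWith hm (replicate_mem_partitionsWith hγ n)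

lemma sub_replicate_mem_partitionsWith [DecidableEq R] {γ δ : R} {m : Multiset R} {n : ℕ}
    (hm : m ∈ partitionsWith s δ) (hle : replicate n γ ≤ m) :
    m - replicate n γ ∈ partitionsWith s (δ - n • γ) := by
  refine ⟨fun x hx => hm.1 x (mem_of_le (Multiset.sub_le_self _ _) hx), ?_⟩
  rw [eq_sub_iff_add_eq, ← hm.2, ← sum_replicate, ← sum_add, tsub_add_cancel_of_le hle]

lemma le_of_mem_partitionsWith_sub_nsmul {γ δ : R} {m : Multiset R} {n N : ℕ} (hγ : γ ∈ s)
    (hm : m ∈ partitionsWith s (δ - n • γ)) (hN : ∀ m ∈ partitionsWith s δ, card m ≤ N) :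
    n ≤ N :=
  (Nat.le_add_left n _).trans (by simpa using hN _ (add_replicate_mem_partitionsWith hγ hm))

lemma image_add_replicate_partitionsWith {γ : R} (hγ : γ ∈ s) (n : ℕ) (δ : R) :
    (· + replicate n γ) '' partitionsWith s (δ - n • γ) =
      {m ∈ partitionsWith s δ | replicate n γ ≤ m} := by
  classical
  ext m
  constructor
  · rintro ⟨m', hm', rfl⟩
    exact ⟨add_replicate_mem_partitionsWith hγ hm', le_add_self⟩
  · rintro ⟨hm, hle⟩
    exact ⟨m - replicate n γ, sub_replicate_mem_partitionsWith hm hle, tsub_add_cancel_of_le hle⟩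

lemma ncard_partitionsWith_replicate_le {γ : R} (hγ : γ ∈ s) (n : ℕ) (δ : R) :
    {m ∈ partitionsWith s δ | replicate n γ ≤ m}.ncard =
      (partitionsWith s (δ - n • γ)).ncard := by
  rw [← image_add_replicate_partitionsWith hγ,
    Set.ncard_image_of_injective _ (add_left_injective _)]

theorem ncard_partitionsWith_nsmul_eq_sum {α : R} (hP : (partitionsWith s α).Finite)
    {T : Finset R} (hTs : ↑T ⊆ s) (hT : ∀ m ∈ partitionsWith s α, ∀ x ∈ m, x ∈ T)
    {N : ℕ} (hN : ∀ m ∈ partitionsWith s α, card m ≤ N) :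
    (partitionsWith s α).ncard • α =
      ∑ γ ∈ T, ∑ n ∈ Finset.Icc 1 N, (partitionsWith s (α - n • γ)).ncard • γ := by
  classical
  set F := hP.toFinset
  calc (partitionsWith s α).ncard • α = ∑ m ∈ F, m.sum := by
        rw [Set.ncard_eq_toFinset_card _ hP, ← Finset.sum_const]
        exact Finset.sum_congr rfl fun m hm => (hP.mem_toFinset.mp hm).2.symm
    _ = ∑ m ∈ F, ∑ γ ∈ T, count γ m • γ := Finset.sum_congr rfl fun m hm =>
        Finset.sum_multiset_count_of_subset m T fun x hx =>
          hT m (hP.mem_toFinset.mp hm) x (mem_toFinset.mp hx)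
    _ = ∑ γ ∈ T, (∑ m ∈ F, count γ m) • γ := by
        rw [Finset.sum_comm]; simp only [Finset.sum_smul]
    _ = _ := Finset.sum_congr rfl fun γ hγ => by
        rw [sum_count_eq_sum_card_filter_replicate_le F γ fun m hm => hN m (hP.mem_toFinset.mp hm),
          Finset.sum_smul]
        refine Finset.sum_congr rfl fun n _ => ?_
        rw [← Set.ncard_coe_finset, Finset.coe_filter]
        simp only [F, Set.Finite.mem_toFinset]
        exact congrArg (· • γ) (ncard_partitionsWith_replicate_le (hTs hγ) n α)

end Partitions

section NumberField

variable {K : Type*} [Field K] [NumberField K]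

instance [IsTotallyReal K] : Nonempty (K →+* ℝ) :=
  ⟨InfinitePlace.embedding_of_isReal (IsTotallyReal.isReal (Classical.arbitrary (InfinitePlace K)))⟩

namespace TotallyPositive

variable {β γ : 𝓞 K}

lemma add (hβ : TotallyPositive K β) (hγ : TotallyPositive K γ) : TotallyPositive K (β + γ) :=
  fun φ => by simpa using add_pos (hβ φ) (hγ φ)

lemma multiset_sum {m : Multiset (𝓞 K)} (hm : m ≠ 0) (h : ∀ x ∈ m, TotallyPositive K x) :
    TotallyPositive K m.sum := by
  induction m using Multiset.induction_on with
  | empty => exact absurd rfl hm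
  | cons a m ih =>
    rw [Multiset.sum_cons]
    rcases eq_or_ne m 0 with rfl | hm'
    · simpa using h a (Multiset.mem_cons_self a 0)
    · exact (h a (Multiset.mem_cons_self a m)).add
        (ih hm' fun x hx => h x (Multiset.mem_cons_of_mem hx))

lemma nsmul {n : ℕ} (hn : n ≠ 0) (hγ : TotallyPositive K γ) : TotallyPositive K (n • γ) :=
  fun φ => by simpa using mul_pos (Nat.cast_pos.mpr (Nat.pos_of_ne_zero hn)) (hγ φ)

lemma of_natCast_mul {n : ℕ} (h : TotallyPositive K ((n : 𝓞 K) * γ)) : TotallyPositive K γ :=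
  fun φ => pos_of_mul_pos_right (by simpa using h φ) n.cast_nonneg

lemma ne_zero [Nonempty (K →+* ℝ)] (hγ : TotallyPositive K γ) : γ ≠ 0 := by
  rintro rfl
  simpa using hγ (Classical.arbitrary _)

end TotallyPositive

def tpIoc (α : 𝓞 K) : Set (𝓞 K) :=
  {β | TotallyPositive K β ∧ (TotallyPositive K (α - β) ∨ β = α)}

abbrev tpPartitions (δ : 𝓞 K) : Set (Multiset (𝓞 K)) :=
  partitionsWith {x | TotallyPositive K x} δ

lemma partitionFun_eq_ncard (δ : 𝓞 K) : partitionFun K δ = (tpPartitions δ).ncard :=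
  Nat.card_coe_set_eq _

lemma tpPartitions_nonempty_of_partitionFun_ne_zero {δ : 𝓞 K} (h : partitionFun K δ ≠ 0) :
    (tpPartitions δ).Nonempty :=
  Set.nonempty_of_ncard_ne_zero (partitionFun_eq_ncard δ ▸ h)

lemma mem_tpIoc_iff {α β : 𝓞 K} :
    β ∈ tpIoc α ↔ TotallyPositive K β ∧ (tpPartitions (α - β)).Nonempty := by
  refine and_congr_right fun _ => ⟨?_, ?_⟩
  · rintro (h | rfl)
    · exact ⟨{α - β}, by simpa [partitionsWith] using h⟩
    · exact ⟨0, by simp [partitionsWith]⟩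
  · rintro ⟨m, hm, hsum⟩
    rcases eq_or_ne m 0 with rfl | h0
    · exact Or.inr (sub_eq_zero.mp (by simpa using hsum.symm)).symm
    · exact Or.inl (hsum ▸ TotallyPositive.multiset_sum h0 hm)

lemma mem_tpIoc_of_mem_of_mem_tpPartitions {α γ : 𝓞 K} {m : Multiset (𝓞 K)}
    (hm : m ∈ tpPartitions α) (hγ : γ ∈ m) : γ ∈ tpIoc α := by
  classical
  refine mem_tpIoc_iff.mpr ⟨hm.1 γ hγ, m - Multiset.replicate 1 γ, ?_⟩
  simpa only [one_smul] using sub_replicate_mem_partitionsWith (n := 1) hm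
    (by rwa [Multiset.replicate_one, Multiset.singleton_le])

lemma mem_tpIoc_of_natCast_mul_eq {α β γ : 𝓞 K} {n : ℕ} (hβ : β ∈ tpIoc α) (hn : 0 < n)
    (h : (n : 𝓞 K) * γ = β) : γ ∈ tpIoc α := by
  subst h
  obtain ⟨hnγ, m, hm⟩ := mem_tpIoc_iff.mp hβ
  refine mem_tpIoc_of_mem_of_mem_tpPartitions
    (add_replicate_mem_partitionsWith hnγ.of_natCast_mul (n := n) (by rwa [nsmul_eq_mul])) ?_
  exact Multiset.mem_add.mpr (Or.inr (Multiset.mem_replicate.mpr ⟨hn.ne', rfl⟩))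

lemma nsmul_mem_tpIoc_of_partitionFun_ne_zero {α γ : 𝓞 K} {n : ℕ} (hγ : TotallyPositive K γ)
    (hn : n ≠ 0) (h : partitionFun K (α - n • γ) ≠ 0) : n • γ ∈ tpIoc α :=
  mem_tpIoc_iff.mpr ⟨hγ.nsmul hn, tpPartitions_nonempty_of_partitionFun_ne_zero h⟩

lemma apply_mem_Ioc_of_mem_tpIoc {α β : 𝓞 K} (hβ : β ∈ tpIoc α) (ψ : K →+* ℝ) :
    ψ β ∈ Set.Ioc 0 (ψ α) := by
  refine ⟨hβ.1 ψ, ?_⟩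
  rcases hβ.2 with h | rfl
  · simpa using (h ψ).le
  · exact le_rfl

lemma finite_tpIoc [IsTotallyReal K] (α : 𝓞 K) : (tpIoc α).Finite := by
  have hnorm {β : 𝓞 K} (hβ : β ∈ tpIoc α) (φ : K →+* ℂ) : ‖φ β‖ ≤ ‖φ α‖ := by
    have hφ := IsTotallyReal.complexEmbedding_isReal φ
    obtain ⟨hpos, hle⟩ := apply_mem_Ioc_of_mem_tpIoc hβ hφ.embedding
    rw [← hφ.coe_embedding_apply, ← hφ.coe_embedding_apply, Complex.norm_real, Complex.norm_real,
      Real.norm_of_nonneg hpos.le, Real.norm_of_nonneg (hpos.le.trans hle)]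
    exact hle
  refine ((Embeddings.finite_of_norm_le K ℂ (∑ φ : K →+* ℂ, ‖φ α‖)).preimage
    RingOfIntegers.coe_injective.injOn).subset fun β hβ => ⟨β.isIntegral_coe, fun φ => ?_⟩
  exact (hnorm hβ φ).trans (Finset.single_le_sum (fun φ _ => norm_nonneg (φ α)) (Finset.mem_univ φ))

lemma finite_tpPartitions [IsTotallyReal K] (δ : 𝓞 K) : (tpPartitions δ).Finite := by
  obtain ⟨ψ⟩ : Nonempty (K →+* ℝ) := inferInstance
  obtain ⟨ε, hε, hεle⟩ := (finite_tpIoc δ).exists_pos_forall_le (f := fun x => ψ x)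
    fun x hx => (apply_mem_Ioc_of_mem_tpIoc hx ψ).1
  refine (Multiset.finite_setOf_forall_mem_card_le (finite_tpIoc δ) ⌈ψ δ / ε⌉₊).subset
    fun m hm => ?_
  have hmT (x) (hx : x ∈ m) : x ∈ tpIoc δ := mem_tpIoc_of_mem_of_mem_tpPartitions hm hx
  refine ⟨hmT, Nat.cast_le.mp ((le_div_iff₀ hε).mpr ?_ |>.trans (Nat.le_ceil _))⟩
  calc (Multiset.card m : ℝ) * ε = Multiset.card (m.map fun x : 𝓞 K => ψ x) • ε := by simp
    _ ≤ (m.map fun x : 𝓞 K => ψ x).sum := Multiset.card_nsmul_le_sum fun y hy => by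
        obtain ⟨x, hx, rfl⟩ := Multiset.mem_map.mp hy
        exact hεle x (hmT x hx)
    _ = ψ δ := by
        rw [← hm.2]
        simpa using (map_multiset_sum (ψ.comp (algebraMap (𝓞 K) K)) m).symm

lemma sigmaK_eq_sum_filter {β : 𝓞 K} (T : Finset (𝓞 K))
    [DecidablePred fun γ : 𝓞 K => ∃ n : ℕ, 0 < n ∧ (n : 𝓞 K) * γ = β]
    (hT : ∀ γ : 𝓞 K, ∀ n : ℕ, 0 < n → (n : 𝓞 K) * γ = β → γ ∈ T) :
    sigmaK K β = ∑ γ ∈ T with ∃ n : ℕ, 0 < n ∧ (n : 𝓞 K) * γ = β, γ := by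
  have hdiv : {γ : 𝓞 K | ∃ n : ℕ, 0 < n ∧ (n : 𝓞 K) * γ = β} =
      ↑{γ ∈ T | ∃ n : ℕ, 0 < n ∧ (n : 𝓞 K) * γ = β} := by
    ext γ
    rw [Finset.coe_filter]
    exact ⟨fun ⟨n, hn, h⟩ => ⟨hT γ n hn h, n, hn, h⟩, And.right⟩
  rw [sigmaK, hdiv, finsum_mem_coe_finset]

open Classical in
theorem sum_sum_Icc_nsmul_eq_sum_filter_product [IsTotallyReal K] (α : 𝓞 K) {N : ℕ}
    (hN : ∀ m ∈ tpPartitions α, Multiset.card m ≤ N) :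
    ∑ γ ∈ (finite_tpIoc α).toFinset, ∑ n ∈ Finset.Icc 1 N, partitionFun K (α - n • γ) • γ =
      ∑ x ∈ (finite_tpIoc α).toFinset ×ˢ (finite_tpIoc α).toFinset with
        ∃ n : ℕ, 0 < n ∧ (n : 𝓞 K) * x.2 = x.1, x.2 * partitionFun K (α - x.1) := by
  set T := (finite_tpIoc α).toFinset
  have hT {β : 𝓞 K} : β ∈ T ↔ β ∈ tpIoc α := (finite_tpIoc α).mem_toFinset
  rw [← Finset.sum_product']
  -- `(γ, n) ↦ (n • γ, γ)`; a term on the left vanishes unless `α - n • γ` has a partition.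
  refine Finset.sum_bij_ne_zero (fun x _ _ => (x.2 • x.1, x.1)) ?_ ?_ ?_ ?_
  · rintro ⟨γ, n⟩ hx hne
    obtain ⟨hγ, hn, -⟩ : γ ∈ T ∧ 1 ≤ n ∧ n ≤ N := by simpa using hx
    have hp : partitionFun K (α - n • γ) ≠ 0 := fun h => hne (by rw [h, zero_smul])
    refine Finset.mem_filter.mpr ⟨Finset.mem_product.mpr ⟨hT.mpr
      (nsmul_mem_tpIoc_of_partitionFun_ne_zero (hT.mp hγ).1 (by omega) hp), hγ⟩,
      n, hn, (nsmul_eq_mul _ _).symm⟩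
  · rintro ⟨γ, n⟩ hx - ⟨γ', n'⟩ - - h
    obtain ⟨hn, rfl⟩ := Prod.mk.injEq .. ▸ h
    have hγ : γ ≠ 0 := (hT.mp (Finset.mem_product.mp hx).1).1.ne_zero
    simpa [nsmul_eq_mul, hγ] using hn
  · rintro ⟨β, γ⟩ hx hne
    simp only [Finset.mem_filter, Finset.mem_product] at hx hne
    obtain ⟨⟨-, hγ⟩, n, hn, rfl⟩ := hx
    have hp : partitionFun K (α - n • γ) ≠ 0 := fun h =>
      hne (by rw [← nsmul_eq_mul, h, Nat.cast_zero, mul_zero])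
    have hnN : n ≤ N := le_of_mem_partitionsWith_sub_nsmul (hT.mp hγ).1
      (tpPartitions_nonempty_of_partitionFun_ne_zero hp).some_mem hN
    refine ⟨(γ, n), Finset.mem_product.mpr ⟨hγ, Finset.mem_Icc.mpr ⟨hn, hnN⟩⟩, ?_, ?_⟩
    · show partitionFun K (α - n • γ) • γ ≠ 0
      rwa [nsmul_eq_mul, nsmul_eq_mul, mul_comm]
    · simp [nsmul_eq_mul]
  · rintro ⟨γ, n⟩ - -
    rw [nsmul_eq_mul, mul_comm]

open Classical in
theorem sum_filter_product_eq_finsum_sigmaK_mul [IsTotallyReal K] (α : 𝓞 K) :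
    ∑ x ∈ (finite_tpIoc α).toFinset ×ˢ (finite_tpIoc α).toFinset with
        ∃ n : ℕ, 0 < n ∧ (n : 𝓞 K) * x.2 = x.1, x.2 * partitionFun K (α - x.1) =
      ∑ᶠ β ∈ tpIoc α, sigmaK K β * partitionFun K (α - β) := by
  have hT {β : 𝓞 K} : β ∈ (finite_tpIoc α).toFinset ↔ β ∈ tpIoc α :=
    (finite_tpIoc α).mem_toFinset
  rw [finsum_mem_eq_finite_toFinset_sum _ (finite_tpIoc α), Finset.sum_filter,
    Finset.sum_product]
  refine Finset.sum_congr rfl fun β hβ => ?_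
  rw [sigmaK_eq_sum_filter _ fun γ n hn h => hT.mpr (mem_tpIoc_of_natCast_mul_eq (hT.mp hβ) hn h),
    Finset.sum_mul, Finset.sum_filter]

end NumberField

theorem recurrence_for_partition_function_general
    (K : Type*) [Field K] [NumberField K]
    (htotreal : ∀ v : InfinitePlace K, v.IsReal)
    (α : 𝓞 K) :
    α * (partitionFun K α : 𝓞 K) =
      ∑ᶠ β ∈ {β : 𝓞 K | TotallyPositive K β ∧
          (TotallyPositive K (α - β) ∨ β = α)},
        sigmaK K β * (partitionFun K (α - β) : 𝓞 K) := by
  have : IsTotallyReal K := ⟨htotreal⟩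
  have hT := finite_tpIoc α
  have hP := finite_tpPartitions α
  obtain ⟨N, hN⟩ := (hP.image Multiset.card).bddAbove
  have hcard (m) (hm : m ∈ tpPartitions α) : Multiset.card m ≤ N := hN ⟨m, hm, rfl⟩
  calc α * (partitionFun K α : 𝓞 K) = (tpPartitions α).ncard • α := by
        rw [partitionFun_eq_ncard, nsmul_eq_mul, mul_comm]
    _ = ∑ γ ∈ hT.toFinset, ∑ n ∈ Finset.Icc 1 N, partitionFun K (α - n • γ) • γ := by
        simp only [partitionFun_eq_ncard]
        exact ncard_partitionsWith_nsmul_eq_sum hP (fun γ hγ => (hT.mem_toFinset.mp hγ).1)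
          (fun m hm x hx => hT.mem_toFinset.mpr (mem_tpIoc_of_mem_of_mem_tpPartitions hm hx))
          hcard
    _ = _ := (sum_sum_Icc_nsmul_eq_sum_filter_product α hcard).trans
        (sum_filter_product_eq_finsum_sigmaK_mul α)

theorem recurrence_for_partition_function
    (K : Type*) [Field K] [NumberField K]
    (htotreal : ∀ v : InfinitePlace K, v.IsReal)
    (α : 𝓞 K) (hα : TotallyPositive K α) :
    α * (partitionFun K α : 𝓞 K) =
      ∑ᶠ β ∈ {β : 𝓞 K | TotallyPositive K β ∧
          (TotallyPositive K (α - β) ∨ β = α)},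
        sigmaK K β * (partitionFun K (α - β) : 𝓞 K) :=
  recurrence_for_partition_function_general K htotreal α
end

section
/- Let D ≥ 2 be a squarefree integer with D ≡ 2 or 3 (mod 4), and let K = ℚ(√D). Then there exist infinitely many n ∈ ℤ≥1 such that p_K(n) is odd, and infinitely many n ∈ ℤ≥1 such that p_K(n) is even. -/
/-!
For `D ≡ 2, 3 (mod 4)` the parts are the `x + y√D` with `|y|√D < x`. Counting the first
coordinates of the parts of all partitions of `n` gives Euler's identity
`n p(n) = ∑_β β₁ ∑_{k ≥ 1} p(n - kβ)`. Modulo 2 the terms of `β` and of its conjugate cancel,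
leaving the classical `n p(n) ≡ ∑_{i + j = n} σ(i) p(j)`. If `p(n) mod 2` were eventually
constant, this would turn into a recurrence of bounded order for `σ(n) mod 2`, which would then be
eventually periodic. But for odd `n`, `σ(n)` is odd exactly when `n` is a square, and an
arithmetic progression does not consist of squares.
-/

noncomputable section

/-- `ω_D`, so that `(1, ω_D)` is an integral basis of `𝓞(ℚ(√D))`. -/
def omegaD (D : ℤ) : ℝ := if D % 4 = 1 then (1 + Real.sqrt D) / 2 else Real.sqrt D

/-- The Galois conjugate `ω_D′` of `ω_D`. -/
def omegaD' (D : ℤ) : ℝ := if D % 4 = 1 then (1 - Real.sqrt D) / 2 else -(Real.sqrt D)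

/-- `ξ_D = -ω_D′`. -/
def xiD (D : ℤ) : ℝ := -omegaD' D

/-- The real embedding of `𝓞 K`, an element `(x, y)` in the integral basis
`(1, ω_D)` being sent to `x + y ω_D`. -/
def emb (D : ℤ) (a : ℤ × ℤ) : ℝ := a.1 + a.2 * omegaD D

/-- The conjugate real embedding, sending `(x, y)` to `x + y ω_D′`. -/
def embConj (D : ℤ) (a : ℤ × ℤ) : ℝ := a.1 + a.2 * omegaD' D

/-- An element of `𝓞 K` is totally positive if it and its conjugate are positive. -/
def TotPos (D : ℤ) (a : ℤ × ℤ) : Prop := 0 < emb D a ∧ 0 < embConj D a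

/-- The partition function `p_K` of `K = ℚ(√D)`: the number of multisets of
totally positive integers of `K` with sum `α`. -/
def pK (D : ℤ) (α : ℤ × ℤ) : ℕ :=
  Nat.card {m : Multiset (ℤ × ℤ) // (∀ β ∈ m, TotPos D β) ∧ m.sum = α}

end

section TotallyPositive

variable {D : ℤ}

theorem totPos_iff (hmod : D % 4 = 2 ∨ D % 4 = 3) (β : ℤ × ℤ) :
    TotPos D β ↔ |(β.2 : ℝ)| * √(D : ℝ) < β.1 := by
  have h1 : ¬ D % 4 = 1 := by omega
  rw [← abs_of_nonneg (Real.sqrt_nonneg (D : ℝ)), ← abs_mul, abs_lt]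
  simp only [TotPos, emb, embConj, omegaD, omegaD', h1, if_false]
  constructor <;> rintro ⟨h, h'⟩ <;> constructor <;> linarith

theorem TotPos.one_le_fst (hmod : D % 4 = 2 ∨ D % 4 = 3) {β : ℤ × ℤ} (h : TotPos D β) :
    1 ≤ β.1 := by
  have : (0 : ℝ) < β.1 := lt_of_le_of_lt (by positivity) ((totPos_iff hmod β).1 h)
  exact_mod_cast this

theorem TotPos.abs_snd_lt_fst (hD : 0 < D) (hmod : D % 4 = 2 ∨ D % 4 = 3) {β : ℤ × ℤ}
    (h : TotPos D β) : |β.2| < β.1 := by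
  have hsqrt : (1 : ℝ) ≤ √(D : ℝ) := Real.one_le_sqrt.2 (by exact_mod_cast hD)
  have : (|β.2| : ℝ) < β.1 :=
    lt_of_le_of_lt (le_mul_of_one_le_right (abs_nonneg _) hsqrt) ((totPos_iff hmod β).1 h)
  exact_mod_cast this

theorem totPos_fst_zero_iff (hmod : D % 4 = 2 ∨ D % 4 = 3) (a : ℤ) :
    TotPos D (a, 0) ↔ 0 < a := by
  simp [totPos_iff hmod]

def conj : ℤ × ℤ ≃+ ℤ × ℤ := AddEquiv.prodCongr (AddEquiv.refl ℤ) (AddEquiv.neg ℤ)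

@[simp]
theorem conj_apply (β : ℤ × ℤ) : conj β = (β.1, -β.2) := rfl

theorem conj_involutive : Function.Involutive conj := fun β => by simp

theorem totPos_conj (hmod : D % 4 = 2 ∨ D % 4 = 3) (β : ℤ × ℤ) :
    TotPos D (conj β) ↔ TotPos D β := by
  simp [totPos_iff hmod]

end TotallyPositive

section Partitions

open Finset
open scoped Classical

variable {D : ℤ}

def IsPartition (D : ℤ) (α : ℤ × ℤ) (m : Multiset (ℤ × ℤ)) : Prop :=
  (∀ β ∈ m, TotPos D β) ∧ m.sum = α

theorem IsPartition.card_le (hmod : D % 4 = 2 ∨ D % 4 = 3) {α : ℤ × ℤ} {m : Multiset (ℤ × ℤ)}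
    (h : IsPartition D α m) : (Multiset.card m : ℤ) ≤ α.1 := by
  have := Multiset.card_nsmul_le_sum (s := m.map Prod.fst) (a := 1) (by
    simp only [Multiset.mem_map]
    rintro _ ⟨β, hβ, rfl⟩
    exact (h.1 β hβ).one_le_fst hmod)
  simpa [← Multiset.fst_sum, h.2] using this

theorem IsPartition.fst_le (hmod : D % 4 = 2 ∨ D % 4 = 3) {α : ℤ × ℤ} {m : Multiset (ℤ × ℤ)}
    (h : IsPartition D α m) {β : ℤ × ℤ} (hβ : β ∈ m) : β.1 ≤ α.1 := by
  rw [← h.2, Multiset.fst_sum]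
  refine Multiset.single_le_sum ?_ _ (Multiset.mem_map_of_mem _ hβ)
  simp only [Multiset.mem_map]
  rintro _ ⟨γ, hγ, rfl⟩
  exact zero_le_one.trans ((h.1 γ hγ).one_le_fst hmod)

theorem pK_eq_zero_of_fst_neg (hmod : D % 4 = 2 ∨ D % 4 = 3) {α : ℤ × ℤ} (hα : α.1 < 0) :
    pK D α = 0 := by
  rw [pK, Nat.card_eq_zero]
  left
  exact ⟨fun ⟨m, hm⟩ => by have := IsPartition.card_le hmod hm; omega⟩

theorem pK_zero (hmod : D % 4 = 2 ∨ D % 4 = 3) : pK D 0 = 1 := by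
  rw [pK, Nat.card_eq_one_iff_exists]
  refine ⟨⟨0, by simp⟩, fun ⟨m, hm⟩ => ?_⟩
  have := IsPartition.card_le hmod hm
  simp_all [← Multiset.card_eq_zero]

noncomputable def totPosBox (D : ℤ) (n : ℕ) : Finset (ℤ × ℤ) :=
  (Icc 1 (n : ℤ) ×ˢ Icc (-(n : ℤ)) n).filter (TotPos D)

theorem mem_totPosBox (hD : 0 < D) (hmod : D % 4 = 2 ∨ D % 4 = 3) {n : ℕ} {β : ℤ × ℤ} :
    β ∈ totPosBox D n ↔ TotPos D β ∧ β.1 ≤ n := by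
  simp only [totPosBox, mem_filter, mem_product, mem_Icc]
  constructor
  · rintro ⟨⟨⟨-, h⟩, -⟩, hβ⟩
    exact ⟨hβ, h⟩
  · rintro ⟨hβ, h⟩
    have h1 := hβ.one_le_fst hmod
    have h2 := abs_lt.1 (hβ.abs_snd_lt_fst hD hmod)
    exact ⟨⟨⟨h1, h⟩, by omega, by omega⟩, hβ⟩

noncomputable def partitions (D : ℤ) (α : ℤ × ℤ) : Finset (Multiset (ℤ × ℤ)) :=
  (Multiset.powerset (α.1.toNat • (totPosBox D α.1.toNat).val)).toFinset.filter (IsPartition D α)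

theorem mem_partitions (hD : 0 < D) (hmod : D % 4 = 2 ∨ D % 4 = 3) {α : ℤ × ℤ}
    {m : Multiset (ℤ × ℤ)} : m ∈ partitions D α ↔ IsPartition D α m := by
  simp only [partitions, mem_filter, Multiset.mem_toFinset, Multiset.mem_powerset,
    and_iff_right_iff_imp, Multiset.le_iff_count, Multiset.count_nsmul]
  intro h β
  by_cases hβ : β ∈ m
  · have hbox : β ∈ (totPosBox D α.1.toNat).val :=
      (mem_totPosBox hD hmod).2 ⟨h.1 β hβ, by have := h.fst_le hmod hβ; omega⟩
    rw [Multiset.count_eq_one_of_mem (totPosBox D _).nodup hbox, mul_one]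
    have := h.card_le hmod
    have := Multiset.count_le_card β m
    omega
  · simp [Multiset.count_eq_zero_of_notMem hβ]

theorem pK_eq_card_partitions (hD : 0 < D) (hmod : D % 4 = 2 ∨ D % 4 = 3) (α : ℤ × ℤ) :
    pK D α = #(partitions D α) :=
  Nat.subtype_card _ fun _ => mem_partitions hD hmod

theorem pK_conj (hmod : D % 4 = 2 ∨ D % 4 = 3) (α : ℤ × ℤ) : pK D (conj α) = pK D α := by
  have hmap : Function.Involutive (Multiset.map conj) := fun m => by
    simp [Multiset.map_map, conj_involutive.comp_self]
  refine Nat.card_congr (Equiv.subtypeEquiv (hmap.toPerm _) fun m => ?_)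
  simp only [Function.Involutive.coe_toPerm, Multiset.mem_map, forall_exists_index, and_imp,
    forall_apply_eq_imp_iff₂, totPos_conj hmod, ← map_multiset_sum]
  exact and_congr_right fun _ =>
    ⟨fun h => by rw [h, conj_involutive], fun h => by rw [← h, conj_involutive]⟩

end Partitions

section EulerIdentity

open Finset

variable {D : ℤ}

theorem sum_eq_sum_card_filter_le {ι : Type*} (s : Finset ι) (f : ι → ℕ) {n : ℕ}
    (hf : ∀ i ∈ s, f i ≤ n) : ∑ i ∈ s, f i = ∑ k ∈ Icc 1 n, #(s.filter (k ≤ f ·)) := by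
  simp only [card_filter]
  rw [sum_comm]
  refine sum_congr rfl fun i hi => ?_
  rw [← card_filter, show (Icc 1 n).filter (· ≤ f i) = Icc 1 (f i) by
    ext k; simp only [mem_filter, mem_Icc]; have := hf i hi; omega]
  simp

theorem card_partitions_filter_le_count (hD : 0 < D) (hmod : D % 4 = 2 ∨ D % 4 = 3)
    (α : ℤ × ℤ) {β : ℤ × ℤ} (hβ : TotPos D β) (k : ℕ) :
    #((partitions D α).filter (k ≤ ·.count β)) = pK D (α - k • β) := by
  rw [pK_eq_card_partitions hD hmod]
  refine card_nbij' (· - .replicate k β) (· + .replicate k β) ?_ ?_ ?_ ?_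
  · intro m hm
    simp only [mem_coe, mem_filter, mem_partitions hD hmod,
      Multiset.le_count_iff_replicate_le] at hm ⊢
    obtain ⟨⟨hpos, hsum⟩, hle⟩ := hm
    refine ⟨fun γ hγ => hpos γ (Multiset.mem_of_le (Multiset.sub_le_self _ _) hγ), ?_⟩
    rw [eq_sub_iff_add_eq, ← hsum, ← Multiset.sum_replicate, ← Multiset.sum_add,
      tsub_add_cancel_of_le hle]
  · intro m hm
    simp only [mem_coe, mem_filter, mem_partitions hD hmod] at hm ⊢
    refine ⟨⟨fun γ hγ => ?_, by simp [Multiset.sum_add, hm.2]⟩, by simp⟩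
    rcases Multiset.mem_add.1 hγ with hγ | hγ
    · exact hm.1 γ hγ
    · rwa [Multiset.eq_of_mem_replicate hγ]
  · intro m hm
    simp only [mem_coe, mem_filter, Multiset.le_count_iff_replicate_le] at hm
    exact tsub_add_cancel_of_le hm.2
  · intro m _
    exact add_tsub_cancel_right m _

/-- Euler's identity: count the first coordinates of the parts of all partitions of `α`. -/
theorem natCast_mul_pK (hD : 0 < D) (hmod : D % 4 = 2 ∨ D % 4 = 3) {α : ℤ × ℤ} {n : ℕ}
    (hα : α.1 = n) :
    (n : ℤ) * pK D α = ∑ β ∈ totPosBox D n, β.1 * ∑ k ∈ Icc 1 n, (pK D (α - k • β) : ℤ) := by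
  set S := partitions D α
  have hS : ∀ m ∈ S, IsPartition D α m := fun m hm => (mem_partitions hD hmod).1 hm
  have hfst : ∀ m ∈ S, (n : ℤ) = ∑ β ∈ totPosBox D n, (m.count β : ℤ) * β.1 := by
    intro m hm
    rw [← hα, ← (hS m hm).2, Multiset.fst_sum, sum_multiset_map_count]
    simp only [nsmul_eq_mul]
    refine sum_subset (fun β hβ => ?_) (fun β _ hβ => ?_)
    · rw [Multiset.mem_toFinset] at hβ
      exact (mem_totPosBox hD hmod).2 ⟨(hS m hm).1 β hβ, hα ▸ (hS m hm).fst_le hmod hβ⟩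
    · simp [Multiset.count_eq_zero_of_notMem (mt Multiset.mem_toFinset.2 hβ)]
  have hcount : ∀ β, ∀ m ∈ S, m.count β ≤ n := fun β m hm => by
    have := (hS m hm).card_le hmod
    have := Multiset.count_le_card β m
    omega
  calc (n : ℤ) * pK D α = ∑ m ∈ S, ∑ β ∈ totPosBox D n, (m.count β : ℤ) * β.1 := by
        rw [pK_eq_card_partitions hD hmod, mul_comm, ← nsmul_eq_mul, ← sum_const]
        exact sum_congr rfl hfst
    _ = ∑ β ∈ totPosBox D n, β.1 * ((∑ m ∈ S, m.count β : ℕ) : ℤ) := by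
        rw [sum_comm]
        push_cast
        simp only [mul_sum, mul_comm]
    _ = _ := by
        refine sum_congr rfl fun β hβ => ?_
        rw [sum_eq_sum_card_filter_le S _ (hcount β)]
        push_cast
        simp only [S, card_partitions_filter_le_count hD hmod α ((mem_totPosBox hD hmod).1 hβ).1]

end EulerIdentity

section ModTwo

open Finset ArithmeticFunction
open scoped ArithmeticFunction.sigma

variable {D : ℤ}

theorem sum_Icc_sum_Icc_eq_sum_antidiagonal_sigma {R : Type*} [CommSemiring R] (n : ℕ)
    (F : ℤ → R) (hF : ∀ x < 0, F x = 0) :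
    ∑ a ∈ Icc 1 n, ∑ k ∈ Icc 1 n, (a : R) * F (n - a * k)
      = ∑ p ∈ antidiagonal n, (σ 1 p.1 : R) * F p.2 := by
  rw [← sum_product' (f := fun (a k : ℕ) => (a : R) * F ((n : ℤ) - a * k)),
    ← sum_filter_of_ne (p := fun x => x.1 * x.2 ≤ n) fun x _ hx => ?_,
    ← sum_fiberwise_of_maps_to (g := fun x => x.1 * x.2) (t := range (n + 1)) fun x hx => ?_,
    Nat.sum_antidiagonal_eq_sum_range_succ fun i j => (σ 1 i : R) * F j]
  · refine sum_congr rfl fun i hi => ?_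
    have hfiber : ((Icc 1 n ×ˢ Icc 1 n).filter (fun x => x.1 * x.2 ≤ n)).filter
        (fun x => x.1 * x.2 = i) = i.divisorsAntidiagonal := by
      ext ⟨a, k⟩
      simp only [mem_filter, mem_product, mem_Icc, Nat.mem_divisorsAntidiagonal]
      constructor
      · rintro ⟨⟨⟨⟨ha, -⟩, hk, -⟩, -⟩, rfl⟩
        exact ⟨rfl, (Nat.mul_pos ha hk).ne'⟩
      · rintro ⟨rfl, hi0⟩
        have := mem_range.1 hi
        have ha := Nat.pos_of_ne_zero (left_ne_zero_of_mul hi0)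
        have hk := Nat.pos_of_ne_zero (right_ne_zero_of_mul hi0)
        exact ⟨⟨⟨⟨ha, by nlinarith⟩, hk, by nlinarith⟩, by omega⟩, rfl⟩
    have hcast : ((n - i : ℕ) : ℤ) = n - i := by have := mem_range.1 hi; omega
    rw [hfiber,
      sum_congr rfl fun x hx => by rw [← Nat.cast_mul, (Nat.mem_divisorsAntidiagonal.1 hx).1],
      ← sum_mul, hcast, sigma_one_apply, ← Nat.sum_divisorsAntidiagonal fun a _ => a,
      Nat.cast_sum]
  · rw [mem_range]
    exact Nat.lt_succ_of_le (mem_filter.1 hx).2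
  · by_contra hle
    exact hx (by rw [hF _ (by omega), mul_zero])

theorem sum_totPosBox_eq_sum_Icc {R : Type*} [CommRing R] [CharP R 2] (hD : 0 < D)
    (hmod : D % 4 = 2 ∨ D % 4 = 3) (n : ℕ) {f : ℤ × ℤ → R} (hf : ∀ β, f (conj β) = f β) :
    ∑ β ∈ totPosBox D n, f β = ∑ a ∈ Icc 1 n, f (a, 0) := by
  rw [← sum_filter_add_sum_filter_not _ (·.2 = 0)]
  have hirrational : ∑ β ∈ totPosBox D n with ¬β.2 = 0, f β = 0 := by
    refine sum_involution (fun β _ => conj β) (fun β _ => by rw [hf, CharTwo.add_self_eq_zero])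
      (fun β hβ _ h => ?_) (fun β hβ => ?_) (fun β _ => conj_involutive β)
    · have := congrArg Prod.snd h
      simp only [conj_apply] at this
      exact (mem_filter.1 hβ).2 (by omega)
    · simp only [mem_filter, mem_totPosBox hD hmod, totPos_conj hmod] at hβ ⊢
      simpa using hβ
  rw [hirrational, add_zero]
  have hrational : ∀ β ∈ (totPosBox D n).filter (·.2 = 0), ((β.1.toNat : ℤ), 0) = β := by
    rintro ⟨b, c⟩ hβ
    simp only [mem_filter, mem_totPosBox hD hmod] at hβ
    have := hβ.1.1.one_le_fst hmod
    rw [hβ.2, Int.toNat_of_nonneg (by omega)]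
  refine sum_nbij' (fun β => β.1.toNat) (fun a => ((a : ℤ), 0)) (fun β hβ => ?_) (fun a ha => ?_)
    hrational (fun a _ => by simp) (fun β hβ => by rw [hrational β hβ])
  · simp only [mem_filter, mem_totPosBox hD hmod, mem_Icc] at hβ ⊢
    have := hβ.1.1.one_le_fst hmod
    omega
  · simp only [mem_filter, mem_totPosBox hD hmod, mem_Icc, totPos_fst_zero_iff hmod,
      and_true] at ha ⊢
    omega

noncomputable def pKParity (D : ℤ) (j : ℕ) : ZMod 2 := pK D (j, 0)

/-- Mod 2, the contributions of a part and of its conjugate cancel in Euler's identity. -/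
theorem natCast_mul_pKParity (hD : 0 < D) (hmod : D % 4 = 2 ∨ D % 4 = 3) (n : ℕ) :
    (n : ZMod 2) * pKParity D n = ∑ p ∈ antidiagonal n, (σ 1 p.1 : ZMod 2) * pKParity D p.2 := by
  have h := congrArg (Int.cast : ℤ → ZMod 2) (natCast_mul_pK hD hmod (α := ((n : ℤ), 0)) rfl)
  push_cast at h
  have hconj : ∀ (k : ℕ) (β : ℤ × ℤ), ((n : ℤ), 0) - k • conj β = conj (((n : ℤ), 0) - k • β) :=
    fun k β => by simp [map_sub]
  have hrational : ∀ a k : ℕ,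
      ((n : ℤ), (0 : ℤ)) - k • ((a : ℤ), 0) = ((n : ℤ) - a * k, 0) :=
    fun a k => by ext <;> simp [mul_comm]
  rw [pKParity, h, sum_totPosBox_eq_sum_Icc hD hmod n fun β => by
    simp only [hconj, pK_conj hmod]; rfl]
  simp only [hrational, mul_sum, Int.cast_natCast]
  exact sum_Icc_sum_Icc_eq_sum_antidiagonal_sigma n (fun x => (pK D (x, 0) : ZMod 2))
    fun x hx => by simp [pK_eq_zero_of_fst_neg hmod (α := (x, 0)) hx]

end ModTwo

section SigmaModTwo

open Finset ArithmeticFunction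
open scoped ArithmeticFunction.sigma

theorem sigma_one_mod_two_eq_zero_of_odd_of_not_isSquare {m : ℕ} (hm : Odd m) (hsq : ¬ IsSquare m) :
    (σ 1 m : ZMod 2) = 0 := by
  have hm0 : m ≠ 0 := by rintro rfl; exact hsq ⟨0, rfl⟩
  have hodd : ∀ d ∈ m.divisors, ((d : ℕ) : ZMod 2) = 1 := fun d hd =>
    ZMod.natCast_eq_one_iff_odd.2 (hm.of_dvd_nat (Nat.dvd_of_mem_divisors hd))
  have hdiv : ∀ d ∈ m.divisors, m / d ∈ m.divisors := fun d hd =>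
    Nat.mem_divisors.2 ⟨Nat.div_dvd_of_dvd (Nat.dvd_of_mem_divisors hd), hm0⟩
  rw [sigma_one_apply, Nat.cast_sum]
  refine sum_involution (fun d _ => m / d) (fun d hd => ?_) (fun d hd _ h => hsq ?_) hdiv
    (fun d hd => Nat.div_div_self (Nat.dvd_of_mem_divisors hd) hm0)
  · rw [hodd d hd, hodd _ (hdiv d hd)]
    exact CharTwo.add_self_eq_zero 1
  · exact ⟨d, by conv_lhs => rw [← Nat.div_mul_cancel (Nat.dvd_of_mem_divisors hd), h]⟩

theorem sigma_one_prime_pow_two_mul_mod_two {p : ℕ} (hp : p.Prime) (hodd : Odd p) (i : ℕ) :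
    (σ 1 (p ^ (2 * i)) : ZMod 2) = 1 := by
  rw [sigma_one_apply_prime_pow hp, Nat.cast_sum]
  simp only [Nat.cast_pow, ZMod.natCast_eq_one_iff_odd.2 hodd, one_pow, sum_const, card_range,
    nsmul_eq_mul, mul_one]
  exact ZMod.natCast_eq_one_iff_odd.2 (odd_two_mul_add_one i)

theorem not_forall_isSquare_add_mul (A : ℕ) {B : ℕ} (hB : 0 < B) :
    ¬ ∀ j, IsSquare (A + j * B) := by
  intro h
  obtain ⟨x, hx⟩ := h B
  obtain ⟨y, hy⟩ := h (B + 1)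
  have hxy : y * y = x * x + B := by rw [← hx, ← hy]; ring
  have hBx : B ≤ x := by nlinarith
  have hlt : x < y := by nlinarith
  nlinarith

theorem sigma_one_mod_two_not_eventually_periodic :
    ¬ ∃ p, 0 < p ∧ ∃ T, ∀ n ≥ T, (σ 1 (n + p) : ZMod 2) = σ 1 n := by
  rintro ⟨p, hp, T, hper⟩
  set n₀ := 3 ^ (2 * T)
  have hT : T ≤ n₀ := (Nat.lt_pow_self (by norm_num)).le.trans
    (Nat.pow_le_pow_right (by norm_num) (by omega))
  have hodd : ∀ j, Odd (n₀ + j * (2 * p)) := fun j =>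
    (Odd.pow (by decide : Odd 3)).add_even ⟨j * p, by ring⟩
  have hone : ∀ j, (σ 1 (n₀ + j * (2 * p)) : ZMod 2) = 1 := by
    intro j
    induction j with
    | zero => simpa using sigma_one_prime_pow_two_mul_mod_two Nat.prime_three (by decide) T
    | succ j ih =>
      rw [show n₀ + (j + 1) * (2 * p) = n₀ + j * (2 * p) + p + p by ring,
        hper _ (by omega), hper _ (by omega), ih]
  refine not_forall_isSquare_add_mul n₀ (by omega : 0 < 2 * p) fun j => ?_
  by_contra hsq
  simpa [sigma_one_mod_two_eq_zero_of_odd_of_not_isSquare (hodd j) hsq] using hone j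

end SigmaModTwo

section Periodicity

open Finset ArithmeticFunction
open scoped ArithmeticFunction.sigma

variable {D : ℤ}

/-- Pigeonhole on the windows `(f (n₀ + i - j))_{j ≤ N}`. -/
theorem exists_eventually_periodic_of_window {α : Type*} [Finite α] (f : ℕ → α) (N n₀ : ℕ)
    (h : ∀ m ≥ n₀, ∀ n ≥ n₀, (∀ j < N, f (m - j) = f (n - j)) → f (m + 1) = f (n + 1)) :
    ∃ p, 0 < p ∧ ∃ T, ∀ n ≥ T, f (n + p) = f n := by
  obtain ⟨a, b, hab, hw⟩ := Finite.exists_ne_map_eq_of_infinite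
    fun i (j : Fin (N + 1)) => f (n₀ + i - j)
  wlog hlt : a < b generalizing a b
  · exact this b a hab.symm hw.symm (by omega)
  have hshift : ∀ t, ∀ j ≤ N, f (n₀ + a + t - j) = f (n₀ + b + t - j) := by
    intro t
    induction t with
    | zero => exact fun j hj => congrFun hw ⟨j, by omega⟩
    | succ t ih =>
      rintro (_ | j) hj
      · rw [Nat.sub_zero, Nat.sub_zero, ← add_assoc, ← add_assoc]
        exact h _ (by omega) _ (by omega) fun j hj => ih j hj.le
      · rw [show n₀ + a + (t + 1) - (j + 1) = n₀ + a + t - j by omega,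
          show n₀ + b + (t + 1) - (j + 1) = n₀ + b + t - j by omega]
        exact ih j (by omega)
  refine ⟨b - a, by omega, n₀ + a, fun n hn => ?_⟩
  have := hshift (n - (n₀ + a)) 0 (Nat.zero_le _)
  rwa [show n₀ + a + (n - (n₀ + a)) - 0 = n by omega,
    show n₀ + b + (n - (n₀ + a)) - 0 = n + (b - a) by omega, eq_comm] at this

theorem sigma_one_succ_mod_two_eq (hD : 0 < D) (hmod : D % 4 = 2 ∨ D % 4 = 3) {N : ℕ}
    {C : ZMod 2} (hC : ∀ j ≥ N, pKParity D j = C) {n : ℕ} (hn : N ≤ n) :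
    (σ 1 (n + 1) : ZMod 2)
      = C + ∑ j ∈ range N, (pKParity D (j + 1) + pKParity D j) * σ 1 (n - j) := by
  have h := congrArg₂ (· + ·) (natCast_mul_pKParity hD hmod (n + 1))
    (natCast_mul_pKParity hD hmod n)
  have hP0 : pKParity D 0 = 1 := by simp [pKParity, ← Prod.zero_eq_mk, pK_zero hmod]
  simp only [hC _ hn, hC (n + 1) (by omega), Nat.sum_antidiagonal_succ', hP0, mul_one,
    add_assoc, ← sum_add_distrib, ← mul_add] at h
  rw [← Nat.sum_antidiagonal_swap, Nat.sum_antidiagonal_eq_sum_range_succ_mk] at h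
  rw [sum_subset (range_subset_range.2 (by omega : N ≤ n + 1)) fun j hj hjN => ?_]
  · simp only [Prod.swap_prod_mk, mul_comm] at h ⊢
    push_cast at h
    grind
  · rw [mem_range, not_lt] at hjN
    rw [hC j hjN, hC (j + 1) (by omega), CharTwo.add_self_eq_zero, zero_mul]

theorem not_eventually_pKParity_eq (hD : 0 < D) (hmod : D % 4 = 2 ∨ D % 4 = 3) (C : ZMod 2)
    (N : ℕ) : ∃ j ≥ N, pKParity D j ≠ C := by
  by_contra! hC
  refine sigma_one_mod_two_not_eventually_periodic
    (exists_eventually_periodic_of_window (fun n => (σ 1 n : ZMod 2)) N N fun m hm n hn hw => ?_)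
  rw [sigma_one_succ_mod_two_eq hD hmod hC hm, sigma_one_succ_mod_two_eq hD hmod hC hn]
  exact congrArg (C + ·) (sum_congr rfl fun j hj => by rw [hw j (mem_range.1 hj)])

end Periodicity

theorem parity_of_partition_function_general (D : ℤ) (hD : 2 ≤ D)
    (hmod : D % 4 = 2 ∨ D % 4 = 3) :
    {n : ℕ | 1 ≤ n ∧ Odd (pK D ((n : ℤ), 0))}.Infinite ∧
    {n : ℕ | 1 ≤ n ∧ Even (pK D ((n : ℤ), 0))}.Infinite := by
  constructor <;> refine Set.infinite_of_forall_exists_gt fun a => ?_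
  · obtain ⟨j, hj, hne⟩ := not_eventually_pKParity_eq (by omega) hmod 0 (a + 1)
    exact ⟨j, ⟨by omega, ZMod.natCast_ne_zero_iff_odd.1 hne⟩, by omega⟩
  · obtain ⟨j, hj, hne⟩ := not_eventually_pKParity_eq (by omega) hmod 1 (a + 1)
    exact ⟨j, ⟨by omega, Nat.not_odd_iff_even.1 (mt ZMod.natCast_eq_one_iff_odd.2 hne)⟩, by omega⟩

theorem parity_of_partition_function (D : ℤ) (hD : 2 ≤ D) (hsf : Squarefree D)
    (hmod : D % 4 = 2 ∨ D % 4 = 3) :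
    {n : ℕ | 1 ≤ n ∧ Odd (pK D ((n : ℤ), 0))}.Infinite ∧
    {n : ℕ | 1 ≤ n ∧ Even (pK D ((n : ℤ), 0))}.Infinite :=
  parity_of_partition_function_general D hD hmod
end

section
/- Let D ≥ 2 be a squarefree integer with D ≠ 5 and K = ℚ(√D), and let α = (⌈2ξ_D⌉ + 2) + 2ω_D. If ⌈ξ_D⌉ − ξ_D < 1/2, then p_K(α) = 9. -/
section VectorPartitions

/-- The fuel `n` must be at least `v.1 + v.2` for this to list all partitions of `v`. -/
def vecParts : ℕ → ℕ × ℕ → Finset (Multiset (ℕ × ℕ))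
  | 0, _ => {0}
  | n + 1, v =>
    if v = 0 then {0}
    else ((Finset.Iic v).erase 0).biUnion fun u => (vecParts n (v - u)).image (u ::ₘ ·)

theorem fst_add_snd_sub_lt {u v : ℕ × ℕ} (huv : u ≤ v) (hu : u ≠ 0) :
    (v - u).1 + (v - u).2 < v.1 + v.2 := by
  have hu' : u.1 ≠ 0 ∨ u.2 ≠ 0 := by
    contrapose! hu
    exact Prod.ext hu.1 hu.2
  have := Prod.mk_le_mk.1 huv
  simp only [Prod.fst_sub, Prod.snd_sub]
  omega

theorem vecPartition_zero_iff {M : Multiset (ℕ × ℕ)} :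
    ((∀ u ∈ M, u ≠ 0) ∧ M.sum = 0) ↔ M = 0 := by
  refine ⟨fun ⟨hM, hsum⟩ => ?_, fun h => h ▸ ⟨by simp, Multiset.sum_zero⟩⟩
  exact Multiset.eq_zero_of_forall_notMem fun u hu =>
    hM u hu (Multiset.sum_eq_zero_iff.1 hsum u hu)

theorem mem_vecParts {n : ℕ} {v : ℕ × ℕ} (hv : v.1 + v.2 ≤ n) {M : Multiset (ℕ × ℕ)} :
    M ∈ vecParts n v ↔ (∀ u ∈ M, u ≠ 0) ∧ M.sum = v := by
  induction n generalizing v M with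
  | zero =>
    obtain rfl : v = 0 := Prod.ext (Nat.eq_zero_of_le_zero (by omega)) (by simp; omega)
    rw [vecParts, Finset.mem_singleton, vecPartition_zero_iff]
  | succ n ih =>
    by_cases hv0 : v = 0
    · rw [hv0, vecParts, if_pos rfl, Finset.mem_singleton, vecPartition_zero_iff]
    simp only [vecParts, if_neg hv0, Finset.mem_biUnion, Finset.mem_erase, Finset.mem_Iic,
      Finset.mem_image]
    constructor
    · rintro ⟨u, ⟨hu0, huv⟩, M', hM', rfl⟩
      obtain ⟨hM'0, hM'sum⟩ := (ih (by have := fst_add_snd_sub_lt huv hu0; omega)).1 hM'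
      refine ⟨Multiset.forall_mem_cons.2 ⟨hu0, hM'0⟩, ?_⟩
      rw [Multiset.sum_cons, hM'sum, add_tsub_cancel_of_le huv]
    · rintro ⟨hM0, hMv⟩
      have hM : M ≠ 0 := by
        rintro rfl
        exact hv0 hMv.symm
      obtain ⟨u, hu⟩ := Multiset.exists_mem_of_ne_zero hM
      obtain ⟨M', rfl⟩ := Multiset.exists_cons_of_mem hu
      have huv : u ≤ v := hMv ▸ Multiset.le_sum_of_mem hu
      have hu0 : u ≠ 0 := hM0 u hu
      have hM'v : M'.sum = v - u := by rw [← hMv, Multiset.sum_cons, add_tsub_cancel_left]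
      have hM'0 : ∀ w ∈ M', w ≠ 0 := fun w hw => hM0 w (Multiset.mem_cons_of_mem hw)
      have := fst_add_snd_sub_lt huv hu0
      exact ⟨u, ⟨hu0, huv⟩, M', (ih (by omega)).2 ⟨hM'0, hM'v⟩, rfl⟩

theorem card_vecPartitions_two_two :
    Nat.card {M : Multiset (ℕ × ℕ) // (∀ u ∈ M, u ≠ 0) ∧ M.sum = (2, 2)} = 9 := by
  have hcard : (vecParts 4 (2, 2)).card = 9 := by decide
  rw [← hcard, ← Nat.card_eq_finsetCard]
  exact Nat.card_congr (Equiv.subtypeEquivRight fun M => (mem_vecParts le_rfl).symm)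

end VectorPartitions

theorem Multiset.exists_map_eq_of_forall_mem_range {α β : Type*} {f : α → β} {N : Multiset β}
    (h : ∀ b ∈ N, b ∈ Set.range f) : ∃ M : Multiset α, M.map f = N := by
  induction N using Multiset.induction with
  | empty => exact ⟨0, rfl⟩
  | cons b N ih =>
    obtain ⟨a, rfl⟩ := h b (Multiset.mem_cons_self _ _)
    obtain ⟨M, rfl⟩ := ih fun b hb => h b (Multiset.mem_cons_of_mem hb)
    exact ⟨a ::ₘ M, Multiset.map_cons _ _ _⟩

theorem ceil_two_mul_of_ceil_sub_lt_half {x : ℝ} (h : (⌈x⌉ : ℝ) - x < 1 / 2) :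
    ⌈2 * x⌉ = 2 * ⌈x⌉ := by
  rw [Int.ceil_eq_iff]
  push_cast
  constructor <;> linarith [Int.le_ceil x]

section QuadraticField

theorem not_isSquare_of_squarefree {D : ℤ} (hD : 2 ≤ D) (hsf : Squarefree D) : ¬IsSquare D := by
  rintro ⟨r, rfl⟩
  rcases Int.isUnit_iff.1 (hsf r dvd_rfl) with rfl | rfl <;> norm_num at hD

theorem xiD_le_omegaD (D : ℤ) : xiD D ≤ omegaD D := by
  unfold xiD omegaD omegaD'
  split_ifs <;> linarith [Real.sqrt_nonneg D]

theorem irrational_xiD {D : ℤ} (hD : 2 ≤ D) (hsf : Squarefree D) : Irrational (xiD D) := by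
  have hirr : Irrational √(D : ℝ) :=
    irrational_sqrt_intCast_iff.2 ⟨not_isSquare_of_squarefree hD hsf, by omega⟩
  unfold xiD omegaD'
  split_ifs
  · simpa using ((hirr.intCast_sub 1).div_natCast two_ne_zero).neg
  · simpa using hirr

theorem one_lt_xiD {D : ℤ} (hD : 2 ≤ D) (hsf : Squarefree D) (hD5 : D ≠ 5) : 1 < xiD D := by
  unfold xiD omegaD'
  split_ifs with h4
  · have hD9 : D ≠ 9 := by
      rintro rfl
      exact absurd (Int.isUnit_iff.1 (hsf 3 ⟨1, rfl⟩)) (by decide)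
    have h9 : (3 : ℝ) ^ 2 < D := by norm_num; exact_mod_cast (by omega : (9 : ℤ) < D)
    have := (Real.lt_sqrt (by norm_num)).2 h9
    linarith
  · have h1 : (1 : ℝ) ^ 2 < D := by norm_num; exact_mod_cast (by omega : (1 : ℤ) < D)
    have := (Real.lt_sqrt (by norm_num)).2 h1
    linarith

theorem embConj_eq (D : ℤ) (a : ℤ × ℤ) : embConj D a = a.1 - a.2 * xiD D := by
  rw [embConj, xiD]
  ring

theorem not_totPos_zero (D : ℤ) : ¬TotPos D 0 := by
  simp [TotPos, emb]

noncomputable def embConjHom (D : ℤ) : ℤ × ℤ →+ ℝ where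
  toFun := embConj D
  map_zero' := by simp [embConj]
  map_add' a b := by
    simp only [embConj, Prod.fst_add, Prod.snd_add, Int.cast_add]
    ring

theorem embConj_le_embConj_sum {D : ℤ} {N : Multiset (ℤ × ℤ)} (hN : ∀ β ∈ N, TotPos D β)
    {β : ℤ × ℤ} (hβ : β ∈ N) : embConj D β ≤ embConj D N.sum := by
  change embConjHom D β ≤ embConjHom D N.sum
  rw [map_multiset_sum]
  refine Multiset.single_le_sum (fun x hx => ?_) _ (Multiset.mem_map_of_mem _ hβ)
  obtain ⟨γ, hγ, rfl⟩ := Multiset.mem_map.1 hx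
  exact (hN γ hγ).2.le

/-- A summand `(x, y)` with `y ≤ -1` has conjugate `x - y ξ_D > -y (ξ_D + ω_D) ≥ ξ_D + ω_D`. -/
theorem snd_nonneg_of_mem {D : ℤ} {N : Multiset (ℤ × ℤ)} (hN : ∀ β ∈ N, TotPos D β)
    (hsum : embConj D N.sum ≤ xiD D + omegaD D) {β : ℤ × ℤ} (hβ : β ∈ N) : 0 ≤ β.2 := by
  by_contra! hneg
  have hle := embConj_le_embConj_sum hN hβ
  have hpos := hN β hβ
  rw [TotPos, emb, embConj_eq] at hpos
  rw [embConj_eq] at hle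
  have hy : (β.2 : ℝ) ≤ -1 := by exact_mod_cast (by omega : β.2 ≤ -1)
  nlinarith

def shear (m : ℤ) : ℕ × ℕ →+ ℤ × ℤ where
  toFun u := ((u.1 : ℤ) + m * u.2, (u.2 : ℤ))
  map_zero' := by simp
  map_add' u w := by
    simp only [Prod.fst_add, Prod.snd_add, Nat.cast_add, Prod.mk_add_mk]
    ring_nf

theorem shear_apply (m : ℤ) (u : ℕ × ℕ) : shear m u = ((u.1 : ℤ) + m * u.2, (u.2 : ℤ)) := rfl

theorem shear_injective (m : ℤ) : Function.Injective (shear m) := by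
  rintro ⟨a, b⟩ ⟨c, d⟩ h
  simp only [shear_apply, Prod.mk.injEq, Nat.cast_inj] at h
  obtain ⟨h1, rfl⟩ := h
  simp_all

theorem totPos_shear {D m : ℤ} (hm : xiD D < m) (hmω : 0 < m + omegaD D) {u : ℕ × ℕ}
    (hu : u ≠ 0) : TotPos D (shear m u) := by
  have key : ∀ c : ℝ, 0 < c → 0 < (u.1 : ℝ) + u.2 * c := by
    intro c hc
    rcases Nat.eq_zero_or_pos u.1 with h1 | h1
    · have h2 : 0 < u.2 := Nat.pos_of_ne_zero fun h2 => hu (Prod.ext h1 h2)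
      rw [h1, Nat.cast_zero, zero_add]
      positivity
    · positivity
  constructor
  · convert key _ hmω using 1
    rw [emb, shear_apply]
    push_cast
    ring
  · convert key _ (sub_pos.2 hm) using 1
    rw [embConj_eq, shear_apply]
    push_cast
    ring

/-- The conjugate `v.1 + v.2 (m - ξ_D)` of `shear m v` is so small that every summand `(x, y)`
has `0 ≤ y ≤ v.2`, and then `x - y ξ_D > 0` forces `x ≥ m y`. -/
theorem mem_range_shear_of_mem {D m : ℤ} {v : ℕ × ℕ} {N : Multiset (ℤ × ℤ)}
    (hN : ∀ β ∈ N, TotPos D β) (hsum : N.sum = shear m v) (hm : xiD D < m)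
    (hv₂ : v.2 * (m - xiD D) ≤ 1) (hv : v.1 + v.2 * (m - xiD D) ≤ xiD D + omegaD D)
    {β : ℤ × ℤ} (hβ : β ∈ N) : β ∈ Set.range (shear m) := by
  have hconj : embConj D N.sum = v.1 + v.2 * (m - xiD D) := by
    rw [hsum, embConj_eq, shear_apply]
    push_cast
    ring
  have hy₀ : 0 ≤ β.2 := snd_nonneg_of_mem hN (hconj ▸ hv) hβ
  have hy₂ : β.2 ≤ v.2 := by
    have hsnd : (N.map Prod.snd).sum = v.2 :=
      (map_multiset_sum (AddMonoidHom.snd ℤ ℤ) N).symm.trans (by rw [hsum]; rfl)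
    refine hsnd ▸ Multiset.single_le_sum (fun y hy => ?_) _ (Multiset.mem_map_of_mem _ hβ)
    obtain ⟨γ, hγ, rfl⟩ := Multiset.mem_map.1 hy
    exact snd_nonneg_of_mem hN (hconj ▸ hv) hγ
  have hx : m * β.2 ≤ β.1 := by
    have hpos := (hN β hβ).2
    rw [embConj_eq] at hpos
    have hy : (β.2 : ℝ) * (m - xiD D) ≤ v.2 * (m - xiD D) :=
      mul_le_mul_of_nonneg_right (by exact_mod_cast hy₂) (sub_pos.2 hm).le
    have : ((m * β.2 - 1 : ℤ) : ℝ) < β.1 := by push_cast; linarith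
    have := Int.cast_lt.1 this
    omega
  obtain ⟨x, hx⟩ := Int.eq_ofNat_of_zero_le (sub_nonneg.2 hx)
  obtain ⟨y, hy⟩ := Int.eq_ofNat_of_zero_le hy₀
  refine ⟨(x, y), Prod.ext ?_ hy.symm⟩
  rw [shear_apply, ← hx, ← hy]
  ring

theorem pK_shear {D m : ℤ} {v : ℕ × ℕ} (hm : xiD D < m) (hv₂ : v.2 * (m - xiD D) ≤ 1)
    (hv : v.1 + v.2 * (m - xiD D) ≤ xiD D + omegaD D) :
    pK D (shear m v) = Nat.card {M : Multiset (ℕ × ℕ) // (∀ u ∈ M, u ≠ 0) ∧ M.sum = v} := by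
  have hmω : 0 < m + omegaD D := by
    have : (0 : ℝ) ≤ v.1 + v.2 * (m - xiD D) := by
      have := sub_pos.2 hm
      positivity
    linarith
  have hpart : {N : Multiset (ℤ × ℤ) | (∀ β ∈ N, TotPos D β) ∧ N.sum = shear m v} =
      Multiset.map (shear m) '' {M | (∀ u ∈ M, u ≠ 0) ∧ M.sum = v} := by
    ext N
    constructor
    · rintro ⟨hN, hsum⟩
      obtain ⟨M, rfl⟩ := Multiset.exists_map_eq_of_forall_mem_range fun β hβ =>
        mem_range_shear_of_mem hN hsum hm hv₂ hv hβ
      refine ⟨M, ⟨fun u hu h0 => ?_, shear_injective m ?_⟩, rfl⟩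
      · have := hN _ (Multiset.mem_map_of_mem _ hu)
        rw [h0, map_zero] at this
        exact not_totPos_zero D this
      · rw [map_multiset_sum, hsum]
    · rintro ⟨M, ⟨hM0, hMsum⟩, rfl⟩
      refine ⟨fun β hβ => ?_, by rw [← map_multiset_sum, hMsum]⟩
      obtain ⟨u, hu, rfl⟩ := Multiset.mem_map.1 hβ
      exact totPos_shear hm hmω (hM0 u hu)
  rw [pK, ← Set.coe_ofPred, hpart,
    Nat.card_image_of_injective (Multiset.map_injective (shear_injective m))]
  rfl

end QuadraticField

theorem nine_partitions (D : ℤ) (hD : 2 ≤ D) (hsf : Squarefree D) (hD5 : D ≠ 5)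
    (h : (⌈xiD D⌉ : ℝ) - xiD D < 1 / 2) :
    pK D (⌈2 * xiD D⌉ + 2, 2) = 9 := by
  set m := ⌈xiD D⌉
  have hξm : xiD D < m := (Int.le_ceil _).lt_of_ne ((irrational_xiD hD hsf).ne_int m)
  have hm : (2 : ℝ) ≤ m := by
    have : (1 : ℤ) < m := by exact_mod_cast (one_lt_xiD hD hsf hD5).trans hξm
    exact_mod_cast this
  have hα : (⌈2 * xiD D⌉ + 2, (2 : ℤ)) = shear m (2, 2) := by
    rw [ceil_two_mul_of_ceil_sub_lt_half h, shear_apply]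
    ext
    · push_cast
      ring
    · rfl
  rw [hα, pK_shear hξm (by push_cast; linarith) (by push_cast; linarith [xiD_le_omegaD D]),
    card_vecPartitions_two_two]
end

section
/- For every n ∈ ℤ≥1 there exists a bound D_n > 0 such that for every squarefree integer D > D_n, the field K = ℚ(√D) satisfies p_K(n) = p(n). -/
noncomputable section

/-!
If `a = x + yω_D` with `y ≠ 0`, its two embeddings differ by `|y| (ω_D - ω_D′) ≥ √D`, so a
totally positive `a` has an embedding exceeding `√D`. Every summand of a partition of `n`
is bounded by `n` in both embeddings, so once `n ≤ √D` all summands are positive rational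
integers, and the partitions of `n` in `K` are exactly its ordinary partitions.
-/

section Embeddings

variable (D : ℤ)

lemma emb_add (a b : ℤ × ℤ) : emb D (a + b) = emb D a + emb D b := by
  simp only [emb, Prod.fst_add, Prod.snd_add, Int.cast_add]
  ring

lemma embConj_add (a b : ℤ × ℤ) : embConj D (a + b) = embConj D a + embConj D b := by
  simp only [embConj, Prod.fst_add, Prod.snd_add, Int.cast_add]
  ring

lemma emb_multiset_sum (m : Multiset (ℤ × ℤ)) : emb D m.sum = (m.map (emb D)).sum :=
  map_multiset_sum (AddMonoidHom.mk' (emb D) (emb_add D)) m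

lemma embConj_multiset_sum (m : Multiset (ℤ × ℤ)) :
    embConj D m.sum = (m.map (embConj D)).sum :=
  map_multiset_sum (AddMonoidHom.mk' (embConj D) (embConj_add D)) m

lemma emb_sub_embConj (a : ℤ × ℤ) :
    emb D a - embConj D a = a.2 * (omegaD D - omegaD' D) := by
  simp only [emb, embConj]
  ring

lemma sqrt_le_omegaD_sub_omegaD' : √(D : ℝ) ≤ omegaD D - omegaD' D := by
  have := Real.sqrt_nonneg (D : ℝ)
  unfold omegaD omegaD'
  split_ifs <;> linarith

end Embeddings

section TotPos

variable {D : ℤ}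

lemma TotPos.snd_eq_zero_of_le_sqrt {a : ℤ × ℤ} (ha : TotPos D a)
    (h : emb D a ≤ √(D : ℝ)) (h' : embConj D a ≤ √(D : ℝ)) : a.2 = 0 := by
  by_contra hy
  have hgap : √(D : ℝ) ≤ |emb D a - embConj D a| := by
    have hy1 : (1 : ℝ) ≤ |(a.2 : ℝ)| := by exact_mod_cast Int.one_le_abs hy
    have hω := sqrt_le_omegaD_sub_omegaD' D
    rw [emb_sub_embConj, abs_mul, abs_of_nonneg ((Real.sqrt_nonneg _).trans hω)]
    exact hω.trans (le_mul_of_one_le_left ((Real.sqrt_nonneg _).trans hω) hy1)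
  have hclose : |emb D a - embConj D a| < √(D : ℝ) :=
    abs_sub_lt_iff.2 ⟨by linarith [ha.2], by linarith [ha.1]⟩
  exact hgap.not_gt hclose

variable {m : Multiset (ℤ × ℤ)} {a : ℤ × ℤ}

lemma emb_le_emb_multiset_sum (hm : ∀ β ∈ m, TotPos D β) (ha : a ∈ m) :
    emb D a ≤ emb D m.sum := by
  rw [emb_multiset_sum]
  refine Multiset.single_le_sum (fun x hx => ?_) _ (Multiset.mem_map_of_mem _ ha)
  obtain ⟨b, hb, rfl⟩ := Multiset.mem_map.1 hx
  exact (hm b hb).1.le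

lemma embConj_le_embConj_multiset_sum (hm : ∀ β ∈ m, TotPos D β) (ha : a ∈ m) :
    embConj D a ≤ embConj D m.sum := by
  rw [embConj_multiset_sum]
  refine Multiset.single_le_sum (fun x hx => ?_) _ (Multiset.mem_map_of_mem _ ha)
  obtain ⟨b, hb, rfl⟩ := Multiset.mem_map.1 hx
  exact (hm b hb).2.le

lemma snd_eq_zero_of_mem_of_le_sqrt (hm : ∀ β ∈ m, TotPos D β)
    (h : emb D m.sum ≤ √(D : ℝ)) (h' : embConj D m.sum ≤ √(D : ℝ)) (ha : a ∈ m) : a.2 = 0 :=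
  (hm a ha).snd_eq_zero_of_le_sqrt ((emb_le_emb_multiset_sum hm ha).trans h)
    ((embConj_le_embConj_multiset_sum hm ha).trans h')

end TotPos

def natCastPair : ℕ →+ ℤ × ℤ := (AddMonoidHom.inl ℤ ℤ).comp (Nat.castAddMonoidHom ℤ)

lemma natCastPair_apply (k : ℕ) : natCastPair k = ((k : ℤ), 0) := rfl

lemma natCastPair_injective : Function.Injective natCastPair := fun _ _ h => by
  simpa [natCastPair_apply] using h

lemma totPos_natCastPair (D : ℤ) {k : ℕ} (hk : 0 < k) : TotPos D (natCastPair k) := by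
  simp [TotPos, emb, embConj, natCastPair_apply, hk]

lemma natCastPair_toNat_fst {a : ℤ × ℤ} (h1 : 0 ≤ a.1) (h2 : a.2 = 0) :
    natCastPair a.1.toNat = a :=
  Prod.ext (Int.toNat_of_nonneg h1) h2.symm

abbrev PartitionK (D : ℤ) (α : ℤ × ℤ) : Type :=
  {m : Multiset (ℤ × ℤ) // (∀ β ∈ m, TotPos D β) ∧ m.sum = α}

lemma pK_eq_card_partitionK (D : ℤ) (α : ℤ × ℤ) : pK D α = Nat.card (PartitionK D α) := rfl

def Nat.Partition.toPartitionK (D : ℤ) {n : ℕ} (P : n.Partition) :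
    PartitionK D (natCastPair n) :=
  ⟨P.parts.map natCastPair, fun _ hβ => by
    obtain ⟨k, hk, rfl⟩ := Multiset.mem_map.1 hβ
    exact totPos_natCastPair D (P.parts_pos hk),
   by rw [← map_multiset_sum, P.parts_sum]⟩

lemma Nat.Partition.toPartitionK_injective (D : ℤ) (n : ℕ) :
    Function.Injective (Nat.Partition.toPartitionK D (n := n)) := fun _ _ h =>
  Nat.Partition.ext (Multiset.map_injective natCastPair_injective (congrArg Subtype.val h))

lemma Nat.Partition.toPartitionK_surjective {D : ℤ} {n : ℕ} (hn : (n : ℝ) ≤ √(D : ℝ)) :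
    Function.Surjective (Nat.Partition.toPartitionK D (n := n)) := by
  rintro ⟨m, hm, hsum⟩
  have hbound : emb D m.sum ≤ √(D : ℝ) ∧ embConj D m.sum ≤ √(D : ℝ) := by
    simpa [hsum, emb, embConj, natCastPair_apply] using hn
  have hsnd a (ha : a ∈ m) : a.2 = 0 := snd_eq_zero_of_mem_of_le_sqrt hm hbound.1 hbound.2 ha
  have hfst a (ha : a ∈ m) : 0 < a.1 := by
    simpa [emb, hsnd a ha] using (hm a ha).1
  have hm_eq : (m.map fun a => a.1.toNat).map natCastPair = m := by
    rw [Multiset.map_map]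
    exact (Multiset.map_congr rfl fun a ha =>
      natCastPair_toNat_fst (hfst a ha).le (hsnd a ha)).trans (Multiset.map_id m)
  refine ⟨⟨m.map fun a => a.1.toNat, fun hi => ?_, ?_⟩, Subtype.ext ?_⟩
  · obtain ⟨a, ha, rfl⟩ := Multiset.mem_map.1 hi
    exact Int.lt_toNat.2 (hfst a ha)
  · apply natCastPair_injective
    rw [map_multiset_sum, hm_eq, hsum]
  · exact hm_eq

theorem pK_eq_p_for_large_D_general (n : ℕ) :
    ∃ Dn : ℤ, 0 < Dn ∧ ∀ D : ℤ, Squarefree D → Dn < D →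
      pK D ((n : ℤ), 0) = Fintype.card (Nat.Partition n) := by
  refine ⟨n ^ 2 + 1, by positivity, fun D _ hD => ?_⟩
  have hn : (n : ℝ) ≤ √(D : ℝ) :=
    Real.le_sqrt_of_sq_le (by exact_mod_cast (lt_trans (lt_add_one _) hD).le)
  rw [← natCastPair_apply, pK_eq_card_partitionK, ← Nat.card_eq_fintype_card]
  exact (Nat.card_eq_of_bijective _
    ⟨Nat.Partition.toPartitionK_injective D n, Nat.Partition.toPartitionK_surjective hn⟩).symm

theorem pK_eq_p_for_large_D (n : ℕ) (hn : 1 ≤ n) :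
    ∃ Dn : ℤ, 0 < Dn ∧ ∀ D : ℤ, Squarefree D → Dn < D →
      pK D ((n : ℤ), 0) = Fintype.card (Nat.Partition n) :=
  pK_eq_p_for_large_D_general n
end
end

section
/- Let n ∈ ℤ≥1 and let D ≥ 2 be a squarefree integer with D ≡ 2 or 3 (mod 4). If D > ⌊n/2⌋², then the field K = ℚ(√D) satisfies p_K(n) = p(n). -/
/-! For `D ≢ 1 (mod 4)` the integer `x + y√D` is totally positive iff `|y|√D < x`. The
`y`-coordinates of the summands of a partition of `n` add up to `0`, so if one of them is
nonzero then at least two are; each such summand has `x > √D > ⌊n/2⌋`, and two of them already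
exceed `n`. So every summand of a partition of `n` in `K` is a rational integer. -/

open Multiset

theorem Multiset.two_le_card_filter_ne_zero {M : Type*} [AddCommMonoid M] [DecidableEq M]
    {s : Multiset M} (hs : s.sum = 0) {x : M} (hx : x ∈ s) (hx0 : x ≠ 0) :
    2 ≤ card (s.filter (· ≠ 0)) := by
  have hzero : (s.filter fun y => ¬y ≠ 0).sum = 0 :=
    sum_eq_zero fun y hy => not_not.1 (mem_filter.1 hy).2
  have hsum : (s.filter (· ≠ 0)).sum = 0 := by
    have := sum_filter_add_sum_filter_not (s := s) (· ≠ 0)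
    rwa [hzero, add_zero, hs] at this
  have hmem : x ∈ s.filter (· ≠ 0) := mem_filter.2 ⟨hx, hx0⟩
  by_contra! hcard
  have hpos : 0 < card (s.filter (· ≠ 0)) := card_pos_iff_exists_mem.2 ⟨x, hmem⟩
  obtain ⟨a, ha⟩ := card_eq_one.1 (by omega : card (s.filter (· ≠ 0)) = 1)
  rw [ha, mem_singleton] at hmem
  rw [ha, sum_singleton, ← hmem] at hsum
  exact hx0 hsum

section TotPos

variable {D : ℤ} {a : ℤ × ℤ}

theorem TotPos.abs_snd_mul_sqrt_lt (hD : D % 4 ≠ 1) (h : TotPos D a) :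
    |(a.2 : ℝ)| * √D < a.1 := by
  obtain ⟨h₁, h₂⟩ := h
  rw [emb, omegaD, if_neg hD] at h₁
  rw [embConj, omegaD', if_neg hD] at h₂
  rw [← abs_of_nonneg (Real.sqrt_nonneg D), ← abs_mul, abs_lt]
  constructor <;> linarith

theorem TotPos.fst_pos (hD : D % 4 ≠ 1) (h : TotPos D a) : 0 < a.1 := by
  have := h.abs_snd_mul_sqrt_lt hD
  exact_mod_cast (by positivity : (0 : ℝ) ≤ |(a.2 : ℝ)| * √D).trans_lt this

theorem TotPos.lt_fst_sq (hD : D % 4 ≠ 1) (h : TotPos D a) (hy : a.2 ≠ 0) : D < a.1 ^ 2 := by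
  have hy₁ : (1 : ℝ) ≤ |(a.2 : ℝ)| := by exact_mod_cast Int.one_le_abs hy
  have hsqrt : √D < a.1 := calc
    √D ≤ |(a.2 : ℝ)| * √D := le_mul_of_one_le_left (Real.sqrt_nonneg _) hy₁
    _ < a.1 := h.abs_snd_mul_sqrt_lt hD
  exact_mod_cast (Real.sqrt_lt' (by exact_mod_cast h.fst_pos hD)).1 hsqrt

theorem totPos_natCast_zero {k : ℕ} (hk : 0 < k) : TotPos D ((k : ℤ), 0) := by
  have : (0 : ℝ) < k := by exact_mod_cast hk
  constructor <;> simpa [emb, embConj]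

end TotPos

theorem snd_eq_zero_of_totPos_of_sum_eq {D : ℤ} {n : ℕ} (hD : D % 4 ≠ 1)
    (hbound : ((n / 2 : ℕ) : ℤ) ^ 2 < D) {m : Multiset (ℤ × ℤ)}
    (hm : ∀ β ∈ m, TotPos D β) (hsum : m.sum = ((n : ℤ), 0)) : ∀ β ∈ m, β.2 = 0 := by
  by_contra! ⟨β, hβm, hβ⟩
  have hcard : 2 ≤ card (m.filter (·.2 ≠ 0)) := by
    have hsnd : (m.map Prod.snd).sum = 0 := by rw [← snd_sum, hsum]
    have := two_le_card_filter_ne_zero hsnd (mem_map_of_mem _ hβm) hβ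
    rwa [filter_map, card_map] at this
  have hlarge : ∀ x ∈ (m.filter (·.2 ≠ 0)).map Prod.fst, ((n / 2 : ℕ) : ℤ) + 1 ≤ x := by
    simp only [mem_map, mem_filter]
    rintro _ ⟨γ, ⟨hγm, hγ⟩, rfl⟩
    have := lt_of_pow_lt_pow_left₀ 2 ((hm γ hγm).fst_pos hD).le
      (hbound.trans ((hm γ hγm).lt_fst_sq hD hγ))
    omega
  have hrest : 0 ≤ ((m.filter fun γ => ¬γ.2 ≠ 0).map Prod.fst).sum :=
    sum_nonneg fun x hx => by
      obtain ⟨γ, hγ, rfl⟩ := mem_map.1 hx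
      exact ((hm γ (mem_of_mem_filter hγ)).fst_pos hD).le
  have hfst : (m.map Prod.fst).sum = n := by rw [← fst_sum, hsum]
  rw [← filter_add_not (·.2 ≠ 0) m, map_add, sum_add] at hfst
  have : 2 • (((n / 2 : ℕ) : ℤ) + 1) ≤ ((m.filter (·.2 ≠ 0)).map Prod.fst).sum := calc
    _ ≤ card ((m.filter (·.2 ≠ 0)).map Prod.fst) • (((n / 2 : ℕ) : ℤ) + 1) := by
      rw [card_map]; exact nsmul_le_nsmul_left (by positivity) hcard
    _ ≤ _ := card_nsmul_le_sum hlarge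
  rw [two_nsmul] at this
  omega

def natInl : ℕ →+ ℤ × ℤ := (AddMonoidHom.inl ℤ ℤ).comp (Nat.castAddMonoidHom ℤ)

@[simp]
theorem natInl_apply (k : ℕ) : natInl k = ((k : ℤ), 0) := rfl

theorem natInl_injective : Function.Injective natInl := fun _ _ h => by
  simpa using congrArg Prod.fst h

theorem Nat.Partition.map_natInl_injective {n : ℕ} :
    Function.Injective fun p : n.Partition => p.parts.map natInl := fun _ _ h =>
  Nat.Partition.ext (map_injective natInl_injective h)

theorem Nat.Partition.totPos_of_mem_map_natInl {D : ℤ} {n : ℕ} (p : n.Partition) :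
    ∀ β ∈ p.parts.map natInl, TotPos D β := by
  simp only [mem_map]
  rintro _ ⟨k, hk, rfl⟩
  exact totPos_natCast_zero (p.parts_pos hk)

theorem Nat.Partition.sum_map_natInl {n : ℕ} (p : n.Partition) :
    (p.parts.map natInl).sum = ((n : ℤ), 0) := by
  rw [← map_multiset_sum, p.parts_sum, natInl_apply]

theorem exists_partition_map_natInl_eq {D : ℤ} {n : ℕ} (hD : D % 4 ≠ 1)
    (hbound : ((n / 2 : ℕ) : ℤ) ^ 2 < D) {m : Multiset (ℤ × ℤ)}
    (hm : ∀ β ∈ m, TotPos D β) (hsum : m.sum = ((n : ℤ), 0)) :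
    ∃ p : n.Partition, p.parts.map natInl = m := by
  have hsnd := snd_eq_zero_of_totPos_of_sum_eq hD hbound hm hsum
  have hmap : (m.map fun β => β.1.toNat).map natInl = m := by
    conv_rhs => rw [← map_id m]
    rw [map_map]
    refine map_congr rfl fun β hβ => ?_
    ext
    · simp [((hm β hβ).fst_pos hD).le]
    · simp [hsnd β hβ]
  refine ⟨⟨m.map fun β => β.1.toNat, ?_, ?_⟩, hmap⟩
  · simp only [mem_map]
    rintro _ ⟨β, hβ, rfl⟩
    exact Int.lt_toNat.2 ((hm β hβ).fst_pos hD)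
  · apply natInl_injective
    rw [map_multiset_sum, hmap, hsum, natInl_apply]

theorem pK_eq_p_of_gt_En_general (n : ℕ) (D : ℤ) (hmod : D % 4 = 2 ∨ D % 4 = 3)
    (hbound : ((n / 2 : ℕ) : ℤ) ^ 2 < D) :
    pK D ((n : ℤ), 0) = Fintype.card (Nat.Partition n) := by
  have hD : D % 4 ≠ 1 := by omega
  have hrange : {m : Multiset (ℤ × ℤ) | (∀ β ∈ m, TotPos D β) ∧ m.sum = ((n : ℤ), 0)} =
      Set.range fun p : n.Partition => p.parts.map natInl := by
    ext m
    constructor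
    · rintro ⟨hm, hsum⟩
      exact exists_partition_map_natInl_eq hD hbound hm hsum
    · rintro ⟨p, rfl⟩
      exact ⟨p.totPos_of_mem_map_natInl, p.sum_map_natInl⟩
  rw [pK, ← Nat.card_eq_fintype_card,
    ← Nat.card_range_of_injective Nat.Partition.map_natInl_injective]
  exact Nat.card_congr (Equiv.setCongr hrange)

theorem pK_eq_p_of_gt_En (n : ℕ) (hn : 1 ≤ n) (D : ℤ) (hD : 2 ≤ D)
    (hsf : Squarefree D) (hmod : D % 4 = 2 ∨ D % 4 = 3)
    (hbound : ((n / 2 : ℕ) : ℤ) ^ 2 < D) :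
    pK D ((n : ℤ), 0) = Fintype.card (Nat.Partition n) :=
  pK_eq_p_of_gt_En_general n D hmod hbound
end

section
/- Let n ∈ ℤ≥1 and let D be a squarefree integer with D ≡ 1 (mod 4), D ≥ 5. Define F_n = (n−1)² if n is even and F_n = n² if n is odd. If D > F_n, then the field K = ℚ(√D) satisfies p_K(n) = p(n). -/
/-! For `D ≡ 1 (mod 4)` the element `β = x + y ω_D` has trace `t = 2x + y` and norm
`(t² - y²D) / 4`, so a totally positive `β` with `y ≠ 0` has `t² > D`, and even `t² > 4D` when
`t` is even (then `y` is even too). The bound `D > F_n` turns this into `t > n`. In a partition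
of `n` the `y`-coordinates sum to `0`, so one irrational summand forces a second, and the traces
of these two alone exceed the trace `2n` of `n`. Hence every summand is a positive rational
integer, and the partitions of `n` in `K` are its ordinary partitions. -/

def Fn (n : ℕ) : ℤ := if Even n then ((n : ℤ) - 1) ^ 2 else (n : ℤ) ^ 2

lemma Fn_nonneg (n : ℕ) : 0 ≤ Fn n := by
  unfold Fn; split_ifs <;> positivity

-- The trace of `x + y ω_D` when `D ≡ 1 (mod 4)`.
def trace : ℤ × ℤ →+ ℤ := (AddMonoidHom.mulLeft 2).coprod (AddMonoidHom.id ℤ)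

lemma trace_apply (β : ℤ × ℤ) : trace β = 2 * β.1 + β.2 := rfl

def natEmb : ℕ →+ ℤ × ℤ := (AddMonoidHom.inl ℤ ℤ).comp (Nat.castAddMonoidHom ℤ)

lemma natEmb_apply (k : ℕ) : natEmb k = ((k : ℤ), 0) := rfl

lemma natEmb_injective : Function.Injective natEmb := fun a b h => by
  simpa [natEmb_apply] using h

section

variable {D : ℤ} {β : ℤ × ℤ}

lemma emb_add_embConj (hmod : D % 4 = 1) : emb D β + embConj D β = trace β := by
  simp only [emb, embConj, omegaD, omegaD', if_pos hmod, trace_apply]; push_cast; ring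

lemma four_mul_emb_mul_embConj (hmod : D % 4 = 1) (hD : 0 ≤ D) :
    4 * (emb D β * embConj D β) = trace β ^ 2 - β.2 ^ 2 * D := by
  have hsq : Real.sqrt D ^ 2 = D := Real.sq_sqrt (by exact_mod_cast hD)
  simp only [emb, embConj, omegaD, omegaD', if_pos hmod, trace_apply]; push_cast
  linear_combination (-(β.2 : ℝ) ^ 2) * hsq

lemma TotPos.trace_pos (hmod : D % 4 = 1) (h : TotPos D β) : 0 < trace β := by
  have := emb_add_embConj (β := β) hmod
  exact_mod_cast (show (0 : ℝ) < trace β by linarith [h.1, h.2])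

lemma TotPos.sq_mul_lt_trace_sq (hmod : D % 4 = 1) (hD : 0 ≤ D) (h : TotPos D β) :
    β.2 ^ 2 * D < trace β ^ 2 := by
  have := four_mul_emb_mul_embConj (β := β) hmod hD
  have := mul_pos h.1 h.2
  exact_mod_cast (show (β.2 ^ 2 * D : ℝ) < trace β ^ 2 by linarith)

lemma TotPos.lt_trace (hmod : D % 4 = 1) {n : ℕ} (hbound : Fn n < D) (h : TotPos D β)
    (hy : β.2 ≠ 0) : (n : ℤ) < trace β := by
  have hD : 0 ≤ D := (Fn_nonneg n).trans hbound.le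
  have ht := h.trace_pos hmod
  have hnorm := h.sq_mul_lt_trace_sq hmod hD
  have hlt : D < trace β ^ 2 := lt_of_le_of_lt
    (le_mul_of_one_le_left hD ((one_le_sq_iff_one_le_abs _).2 (Int.one_le_abs hy))) hnorm
  unfold Fn at hbound
  split_ifs at hbound with hn
  · obtain ⟨k, rfl⟩ := hn
    push_cast at hbound ⊢
    have hle : (k : ℤ) + k ≤ trace β := by nlinarith
    refine lt_of_le_of_ne hle fun heq => ?_
    obtain ⟨l, hl⟩ : Even β.2 := ⟨k - β.1, by rw [trace_apply] at heq; omega⟩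
    rw [← heq, hl] at hnorm
    have hl0 : l ≠ 0 := by rintro rfl; exact hy (by simpa using hl)
    have : 1 ≤ l ^ 2 := (one_le_sq_iff_one_le_abs _).2 (Int.one_le_abs hl0)
    have hk : (2 * k - 1 : ℤ) ^ 2 < k ^ 2 := by nlinarith
    rcases k.eq_zero_or_pos with rfl | hk0
    · norm_num at hk
    · nlinarith
  · nlinarith

lemma snd_eq_zero_of_sum_eq (hmod : D % 4 = 1) {n : ℕ} (hbound : Fn n < D)
    {m : Multiset (ℤ × ℤ)} (hpos : ∀ β ∈ m, TotPos D β) (hsum : m.sum = ((n : ℤ), 0)) :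
    ∀ β ∈ m, β.2 = 0 := by
  by_contra! ⟨β, hβm, hβ⟩
  obtain ⟨m₁, rfl⟩ := Multiset.exists_cons_of_mem hβm
  have hsnd : β.2 + (m₁.map Prod.snd).sum = 0 := by
    have := map_multiset_sum (AddMonoidHom.snd ℤ ℤ) (β ::ₘ m₁)
    rw [hsum] at this
    simpa using this.symm
  obtain ⟨γ, hγm, hγ⟩ : ∃ γ ∈ m₁, γ.2 ≠ 0 := by
    by_contra! h
    have : (m₁.map Prod.snd).sum = 0 := Multiset.sum_eq_zero fun y hy => by
      obtain ⟨δ, hδ, rfl⟩ := Multiset.mem_map.1 hy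
      exact h δ hδ
    omega
  obtain ⟨m₂, rfl⟩ := Multiset.exists_cons_of_mem hγm
  have htrace : trace β + trace γ + (m₂.map trace).sum = 2 * n := by
    have := map_multiset_sum trace (β ::ₘ γ ::ₘ m₂)
    rw [hsum, trace_apply] at this
    simp only [Multiset.map_cons, Multiset.sum_cons] at this
    linarith
  have hrest : 0 ≤ (m₂.map trace).sum :=
    Multiset.sum_nonneg fun t ht => by
      obtain ⟨δ, hδ, rfl⟩ := Multiset.mem_map.1 ht
      exact ((hpos δ (by simp [hδ])).trace_pos hmod).le
  have hβn := (hpos β (by simp)).lt_trace hmod hbound hβ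
  have hγn := (hpos γ (by simp)).lt_trace hmod hbound hγ
  omega

lemma totPos_natEmb_iff {k : ℕ} : TotPos D (natEmb k) ↔ 0 < k := by
  simp [TotPos, emb, embConj, natEmb_apply]

lemma totPos_and_sum_eq_iff (hmod : D % 4 = 1) {n : ℕ} (hbound : Fn n < D)
    (m : Multiset (ℤ × ℤ)) :
    ((∀ β ∈ m, TotPos D β) ∧ m.sum = ((n : ℤ), 0)) ↔
      ∃ p : n.Partition, p.parts.map natEmb = m := by
  constructor
  · rintro ⟨hpos, hsum⟩
    have : CanLift (ℤ × ℤ) ℕ natEmb fun β => β.2 = 0 ∧ 0 ≤ β.1 :=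
      ⟨fun β ⟨h₂, h₁⟩ => ⟨β.1.toNat, by ext <;> simp [natEmb_apply, h₁, h₂]⟩⟩
    lift m to Multiset ℕ using fun β hβ => by
      have h₂ := snd_eq_zero_of_sum_eq hmod hbound hpos hsum β hβ
      have := (hpos β hβ).1
      simp only [emb, h₂, Int.cast_zero, zero_mul, add_zero, Int.cast_pos] at this
      exact ⟨h₂, this.le⟩
    refine ⟨⟨m, fun {k} hk => totPos_natEmb_iff.1 (hpos _ (Multiset.mem_map_of_mem _ hk)),
      natEmb_injective (by rw [map_multiset_sum, hsum, natEmb_apply])⟩, rfl⟩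
  · rintro ⟨p, rfl⟩
    refine ⟨fun β hβ => ?_, by rw [← map_multiset_sum, p.parts_sum, natEmb_apply]⟩
    obtain ⟨k, hk, rfl⟩ := Multiset.mem_map.1 hβ
    exact totPos_natEmb_iff.2 (p.parts_pos hk)

end

theorem pK_eq_p_of_gt_Fn_general (n : ℕ) (D : ℤ) (hmod : D % 4 = 1)
    (hbound : (if Even n then ((n : ℤ) - 1) ^ 2 else (n : ℤ) ^ 2) < D) :
    pK D ((n : ℤ), 0) = Fintype.card (Nat.Partition n) := by
  have hinj : Function.Injective fun p : n.Partition => p.parts.map natEmb :=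
    fun p q h => Nat.Partition.ext (Multiset.map_injective natEmb_injective h)
  rw [← Nat.card_eq_fintype_card, pK]
  exact Nat.card_congr <| (Equiv.subtypeEquivRight (totPos_and_sum_eq_iff hmod hbound)).trans
    (Equiv.ofInjective _ hinj).symm

theorem pK_eq_p_of_gt_Fn (n : ℕ) (hn : 1 ≤ n) (D : ℤ) (hD : 5 ≤ D)
    (hsf : Squarefree D) (hmod : D % 4 = 1)
    (hbound : (if Even n then ((n : ℤ) - 1) ^ 2 else (n : ℤ) ^ 2) < D) :
    pK D ((n : ℤ), 0) = Fintype.card (Nat.Partition n) :=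
  pK_eq_p_of_gt_Fn_general n D hmod hbound
end
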